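/- arXiv:1710.07835 — 5 statements merged into one kernel-verified Lean document; each statement's English description precedes it below -/
import Mathlib

section
/- Let m ≥ 2 be an integer and let s_2, …, s_m ∈ (0, ∞). If there exists a constant C > 0 such that sup_{1 ≤ j_1 ≤ n} ( Σ_{j_2=1}^n ( ⋯ ( Σ_{j_m=1}^n |T(e_{j_1}, …, e_{j_m})|^{s_m} )^{s_{m−1}/s_m} ⋯ )^{s_2/s_3} )^{1/s_2} ≤ C ‖T‖ for all positive integers n and all m-linear forms T : ℓ_m^n × ⋯ × ℓ_m^n → 𝕂, then s_2 ≥ m. -/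
open scoped ENNReal

/-- The iterated mixed-norm expression
`( Σ_{j_1} ( ⋯ ( Σ_{j_m} f(j_1,…,j_m)^{s_m} )^{s_{m−1}/s_m} ⋯ )^{s_1/s_2} )^{1/s_1}`,
defined recursively: for exponents `s : Fin m → ℝ` and `f : (Fin m → Fin n) → ℝ`. -/
noncomputable def mixedNorm (n : ℕ) : (m : ℕ) → (Fin m → ℝ) → ((Fin m → Fin n) → ℝ) → ℝ
  | 0, _, f => f Fin.elim0
  | (m + 1), s, f =>
      (∑ j : Fin n,
        (mixedNorm n m (fun i => s i.succ) (fun js => f (Fin.cons j js))) ^ (s 0)) ^ (1 / s 0)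

/-!
Test the inequality on the form `T(x¹, …, xᵐ) = x¹₁ · Σⱼ x²ⱼ ⋯ xᵐⱼ` on `ℓ_mⁿ`. Hölder's
inequality gives `‖T‖ ≤ n^{1/m}`, while `T(e₁, e_{j₂}, …, e_{j_m})` is `1` when `j₂ = ⋯ = j_m`
and `0` otherwise, so the mixed norm at `j₁ = 1` equals `n^{1/s₂}`. Thus `n^{1/s₂} ≤ C n^{1/m}`
for every `n`, which forces `s₂ ≥ m`.
-/

open Finset

open MeasureTheory in
theorem Real.sum_prod_rpow_le_prod_sum_rpow {ι κ : Type*} [Fintype κ] (s : Finset ι)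
    {f : ι → κ → ℝ} (hf : ∀ i j, 0 ≤ f i j) {p : ι → ℝ} (hp : ∑ i ∈ s, p i = 1)
    (hp₀ : ∀ i ∈ s, 0 ≤ p i) :
    ∑ j, ∏ i ∈ s, f i j ^ p i ≤ ∏ i ∈ s, (∑ j, f i j) ^ p i := by
  let _ : MeasurableSpace κ := ⊤
  have _ : MeasurableSingletonClass κ := ⟨fun _ => trivial⟩
  have h := ENNReal.lintegral_prod_norm_pow_le (μ := Measure.count) s
    (f := fun i j => ENNReal.ofReal (f i j)) (fun i _ => (measurable_of_countable _).aemeasurable)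
    hp hp₀
  simp only [lintegral_count, tsum_fintype] at h
  have hsum : ∀ i, 0 ≤ ∑ j, f i j := fun i => sum_nonneg fun j _ => hf i j
  rw [← ENNReal.ofReal_le_ofReal_iff (prod_nonneg fun i _ => Real.rpow_nonneg (hsum i) _)]
  convert h using 1
  · rw [ENNReal.ofReal_sum_of_nonneg fun j _ => prod_nonneg fun i _ => Real.rpow_nonneg (hf i j) _]
    refine sum_congr rfl fun j _ => ?_
    rw [ENNReal.ofReal_prod_of_nonneg fun i _ => Real.rpow_nonneg (hf i j) _]
    exact prod_congr rfl fun i hi => (ENNReal.ofReal_rpow_of_nonneg (hf i j) (hp₀ i hi)).symm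
  · rw [ENNReal.ofReal_prod_of_nonneg fun i _ => Real.rpow_nonneg (hsum i) _]
    refine prod_congr rfl fun i hi => ?_
    rw [← ENNReal.ofReal_rpow_of_nonneg (hsum i) (hp₀ i hi),
      ENNReal.ofReal_sum_of_nonneg fun j _ => hf i j]

section SelectorForm

variable (𝕂 : Type*) [RCLike 𝕂] {κ ι : Type*} [Fintype κ] [Fintype ι] (p : ℝ≥0∞)

noncomputable def selectorForm (c : κ → ι → ι) :
    ContinuousMultilinearMap 𝕂 (fun _ : κ => PiLp p (fun _ : ι => 𝕂)) 𝕂 :=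
  ∑ j, (ContinuousMultilinearMap.mkPiAlgebra 𝕂 κ 𝕂).compContinuousLinearMap
    fun k => PiLp.proj p (fun _ => 𝕂) (c k j)

variable {𝕂 p}

theorem selectorForm_apply (c : κ → ι → ι) (x : κ → PiLp p (fun _ : ι => 𝕂)) :
    selectorForm 𝕂 p c x = ∑ j, ∏ k, x k (c k j) := by
  simp [selectorForm]

theorem selectorForm_apply_single [DecidableEq ι] (c : κ → ι → ι) (i : κ → ι) :
    selectorForm 𝕂 p c (fun k => WithLp.toLp p (Pi.single (i k) 1)) =
      #{j | ∀ k, c k j = i k} := by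
  simp [selectorForm_apply, prod_boole]

theorem norm_selectorForm_le [DecidableEq κ] {q : ℕ} [Fact (1 ≤ (q : ℝ≥0∞))]
    (hκ : Fintype.card κ = q) (k₀ : κ) (j₀ : ι) :
    ‖selectorForm 𝕂 q (fun k j => if k = k₀ then j₀ else j)‖ ≤
      (Fintype.card ι : ℝ) ^ (1 / (q : ℝ)) := by
  set r : ℝ := (q : ℝ)
  have hr : 0 < r := Nat.cast_pos.mpr (hκ ▸ Fintype.card_pos_iff.mpr ⟨k₀⟩)
  refine ContinuousMultilinearMap.opNorm_le_bound (by positivity) fun x => ?_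
  -- Replacing the fixed coordinate `x k₀ j₀` by `‖x k₀‖` in every column puts all `q` factors
  -- in `ℓ_q`, so Hölder with `q` equal exponents `1 / q` applies.
  set g : κ → ι → ℝ := fun k j => if k = k₀ then ‖x k₀‖ else ‖x k j‖
  have hg : ∀ k j, 0 ≤ g k j := fun k j => by positivity
  have hnorm : ∀ k, (∑ j, g k j ^ r) ^ (1 / r) =
      (if k = k₀ then (Fintype.card ι : ℝ) ^ (1 / r) else 1) * ‖x k‖ := by
    intro k
    by_cases hk : k = k₀
    · subst hk
      simp only [g, if_true, sum_const, card_univ, nsmul_eq_mul]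
      rw [Real.mul_rpow (by positivity) (by positivity), one_div,
        Real.rpow_rpow_inv (norm_nonneg _) hr.ne']
    · simp only [g, hk, if_false, one_mul]
      rw [PiLp.norm_eq_sum (by rw [ENNReal.toReal_natCast]; exact hr)]
      simp [r]
  calc ‖selectorForm 𝕂 q (fun k j => if k = k₀ then j₀ else j) x‖
      ≤ ∑ j, ∏ k, g k j := by
        rw [selectorForm_apply]
        refine (norm_sum_le _ _).trans (sum_le_sum fun j _ => ?_)
        rw [norm_prod]
        refine prod_le_prod (fun _ _ => norm_nonneg _) fun k _ => ?_
        by_cases hk : k = k₀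
        · subst hk; simpa [g] using PiLp.norm_apply_le (x k) j₀
        · simp [g, hk]
    _ = ∑ j, ∏ k, (g k j ^ r) ^ (1 / r) := by
        simp only [one_div, Real.rpow_rpow_inv (hg _ _) hr.ne']
    _ ≤ ∏ k, (∑ j, g k j ^ r) ^ (1 / r) :=
        Real.sum_prod_rpow_le_prod_sum_rpow univ (fun k j => Real.rpow_nonneg (hg k j) _)
          (by simp [r, hκ, hr.ne']) fun _ _ => by positivity
    _ = (Fintype.card ι : ℝ) ^ (1 / r) * ∏ k, ‖x k‖ := by
        rw [prod_congr rfl fun k _ => hnorm k, prod_mul_distrib, prod_ite_eq' univ k₀]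
        simp

theorem selectorForm_apply_single_shift [DecidableEq ι] {m : ℕ} (hm : 1 < m) (j₀ : ι)
    (js : Fin (m - 1) → ι) :
    selectorForm 𝕂 p (fun k j => if k = ⟨0, by omega⟩ then j₀ else j)
      (fun i : Fin m => WithLp.toLp p
        (Pi.single (if (i : ℕ) = 0 then j₀ else js ⟨(i : ℕ) - 1, by omega⟩) 1)) =
      #{j | ∀ i, js i = j} := by
  rw [selectorForm_apply_single]
  congr 2
  ext j
  simp only [mem_filter, mem_univ, true_and, Fin.ext_iff]
  constructor
  · intro h i
    have := h ⟨i + 1, by omega⟩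
    simp only [Nat.add_one_ne_zero, if_false, Nat.add_sub_cancel] at this
    exact this.symm
  · intro h k
    split_ifs <;> simp_all

end SelectorForm

section MixedNorm

variable {n : ℕ}

theorem mixedNorm_zero : ∀ {M : ℕ} {s : Fin M → ℝ}, (∀ i, 0 < s i) →
    mixedNorm n M s (fun _ => 0) = 0
  | 0, _, _ => rfl
  | M + 1, s, hs => by
    simp [mixedNorm, mixedNorm_zero (M := M) fun i => hs i.succ, Real.zero_rpow (hs 0).ne',
      Real.zero_rpow (inv_pos.2 (hs 0)).ne']

theorem mixedNorm_indicator_eq : ∀ {M : ℕ} {s : Fin M → ℝ}, (∀ i, 0 < s i) →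
    ∀ js₀ : Fin M → Fin n, mixedNorm n M s (fun js => if js = js₀ then 1 else 0) = 1
  | 0, _, _, _ => by simp [mixedNorm, eq_iff_true_of_subsingleton]
  | M + 1, s, hs, js₀ => by
    obtain ⟨a, js₁, rfl⟩ : ∃ a js₁, js₀ = Fin.cons a js₁ := ⟨_, _, (Fin.cons_self_tail js₀).symm⟩
    have hinner : ∀ j, mixedNorm n M (fun i => s i.succ)
        (fun js => if (Fin.cons j js : Fin (M + 1) → Fin n) = Fin.cons a js₁ then 1 else 0) =
          if j = a then 1 else 0 := by
      intro j
      by_cases hj : j = a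
      · simpa [hj, Fin.cons_inj] using mixedNorm_indicator_eq (fun i => hs i.succ) js₁
      · simpa [hj, Fin.cons_inj] using mixedNorm_zero (n := n) fun i => hs i.succ
    simp only [mixedNorm, hinner]
    simp [Real.zero_rpow (hs 0).ne']

theorem mixedNorm_card_common_value {M : ℕ} (hM : 0 < M) {s : Fin M → ℝ} (hs : ∀ i, 0 < s i) :
    mixedNorm n M s (fun js => (#{j | ∀ i, js i = j} : ℝ)) = (n : ℝ) ^ (1 / s ⟨0, hM⟩) := by
  obtain _ | M := M
  · omega
  have hinner : ∀ (j : Fin n) (js : Fin M → Fin n),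
      (#{j' | ∀ i, (Fin.cons j js : Fin (M + 1) → Fin n) i = j'} : ℝ) =
        if js = fun _ => j then 1 else 0 := by
    intro j js
    have hiff : ∀ j', (∀ i, (Fin.cons j js : Fin (M + 1) → Fin n) i = j') ↔
        j' = j ∧ js = fun _ => j := by
      intro j'
      simp only [Fin.forall_fin_succ, Fin.cons_zero, Fin.cons_succ, funext_iff]
      grind
    simp only [hiff]
    split_ifs with h <;> simp [h, filter_eq']
  simp only [mixedNorm, hinner, mixedNorm_indicator_eq (fun i => hs i.succ), Real.one_rpow]
  simp

end MixedNorm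

theorem le_of_forall_natCast_rpow_le_mul_rpow {a b C : ℝ}
    (h : ∀ n : ℕ, 0 < n → (n : ℝ) ^ a ≤ C * (n : ℝ) ^ b) : a ≤ b := by
  by_contra! hba
  have hlim : Filter.Tendsto (fun n : ℕ => (n : ℝ) ^ (a - b)) Filter.atTop Filter.atTop :=
    (tendsto_rpow_atTop (sub_pos.2 hba)).comp tendsto_natCast_atTop_atTop
  obtain ⟨n, hn, hCn⟩ := ((Filter.eventually_gt_atTop 0).and (hlim.eventually_gt_atTop C)).exists
  have hn' : (0 : ℝ) < n := by exact_mod_cast hn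
  rw [Real.rpow_sub hn', lt_div_iff₀ (by positivity)] at hCn
  exact (h n hn).not_gt hCn

/-- **Optimality: `s₂ ≥ m`.**
If for exponents `s_2, …, s_m ∈ (0,∞)` (here `s ⟨k-2,_⟩ = s_k`) there is `C > 0` with
`sup_{j_1} ( Σ_{j_2} ( ⋯ ( Σ_{j_m} |T(e_{j_1},…,e_{j_m})|^{s_m} )^{s_{m−1}/s_m} ⋯ )^{s_2/s_3} )^{1/s_2}
≤ C‖T‖` for all `n` and all `m`-linear forms `T : ℓ_m^n × ⋯ × ℓ_m^n → 𝕂`, then `s_2 ≥ m`. -/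
theorem exponent_s2_ge_m (𝕂 : Type*) [RCLike 𝕂] (m : ℕ) (hm : 2 ≤ m)
    (s : Fin (m - 1) → ℝ) (hs : ∀ i, 0 < s i) :
    haveI : Fact ((1 : ℝ≥0∞) ≤ (m : ℝ≥0∞)) := ⟨by exact_mod_cast (by omega : 1 ≤ m)⟩
    (∃ C : ℝ, 0 < C ∧ ∀ n : ℕ, 0 < n →
        ∀ T : ContinuousMultilinearMap 𝕂
            (fun _ : Fin m => PiLp (m : ℝ≥0∞) (fun _ : Fin n => 𝕂)) 𝕂,
          ⨆ j1 : Fin n,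
            mixedNorm n (m - 1) s
              (fun js => ‖T (fun i : Fin m =>
                (WithLp.equiv (m : ℝ≥0∞) (Fin n → 𝕂)).symm
                  (Pi.single (if (i : ℕ) = 0 then j1
                    else js ⟨(i : ℕ) - 1, by have := i.isLt; omega⟩) 1))‖)
            ≤ C * ‖T‖) →
      (m : ℝ) ≤ s ⟨0, by omega⟩ := by
  rintro ⟨C, hC, H⟩
  have : Fact ((1 : ℝ≥0∞) ≤ (m : ℝ≥0∞)) := ⟨by exact_mod_cast (by omega : 1 ≤ m)⟩
  suffices h : ∀ n : ℕ, 0 < n → (n : ℝ) ^ (1 / s ⟨0, by omega⟩) ≤ C * (n : ℝ) ^ (1 / (m : ℝ)) by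
    exact (one_div_le_one_div (hs _) (by positivity)).1 (le_of_forall_natCast_rpow_le_mul_rpow h)
  intro n hn
  let T := selectorForm 𝕂 (m : ℝ≥0∞)
    (fun (k : Fin m) j => if k = ⟨0, by omega⟩ then (⟨0, hn⟩ : Fin n) else j)
  have hT := (le_ciSup (Set.finite_range _).bddAbove (⟨0, hn⟩ : Fin n)).trans (H n hn T)
  simp only [WithLp.equiv_symm_apply, T, selectorForm_apply_single_shift hm, norm_natCast] at hT
  rw [mixedNorm_card_common_value (by omega) hs] at hT
  refine hT.trans (mul_le_mul_of_nonneg_left ?_ hC.le)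
  simpa using norm_selectorForm_le (Fintype.card_fin m) (⟨0, by omega⟩ : Fin m) (⟨0, hn⟩ : Fin n)
end

section
/- Let m be a positive integer, r ≥ 1, and let 𝐩, 𝐪, 𝐬 ∈ [1, ∞]^m satisfy: q_k ≥ p_k for k = 2, …, m, q_1 > p_1, and 1/r − |1/𝐩| + |1/𝐪| ≥ 0, where the exponents 𝐬 are determined by 1/s_k − |1/𝐪|_{≥k} = 1/r − |1/𝐩|_{≥k} for each k = 1, …, m. Then for all Banach spaces X_1, …, X_m and Y over 𝕂 and every continuous m-linear operator T : X_1 × ⋯ × X_m → Y, if T is multiple (r; 𝐩)-summing with constant C, then T is multiple (𝐬; 𝐪)-summing with the same constant C (i.e. the inclusion operator between these classes has norm 1). -/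
open scoped ENNReal

/-- The anisotropic mixed-norm expression
`( Σ_{j_1} ( ⋯ ( Σ_{j_m} f(j_1,…,j_m)^{r_m} )^{r_{m−1}/r_m} ⋯ )^{r_1/r_2} )^{1/r_1}`
for exponents `r : Fin m → ℝ≥0∞`; an `ℓ_{r_i}`-sum with `r_i = ∞` is replaced by the
supremum over the corresponding index. -/
noncomputable def mixedNormE (n : ℕ) : (m : ℕ) → (Fin m → ℝ≥0∞) → ((Fin m → Fin n) → ℝ) → ℝ
  | 0, _, f => f Fin.elim0
  | (m + 1), r, f =>
      if r 0 = ⊤ then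
        ⨆ j : Fin n, mixedNormE n m (fun i => r i.succ) (fun js => f (Fin.cons j js))
      else
        (∑ j : Fin n,
          (mixedNormE n m (fun i => r i.succ) (fun js => f (Fin.cons j js))) ^ (r 0).toReal)
          ^ (1 / (r 0).toReal)

/-- The weak `ℓ_p` norm of a finite sequence `(x_j)_{j=1}^n` in a normed space `X`,
`‖(x_j)‖_{w,p} = sup_{φ ∈ B_{X*}} ( Σ_j |φ(x_j)|^p )^{1/p}`, the inner sum being a
supremum when `p = ∞`. -/
noncomputable def weakLpNormE (𝕂 : Type*) [RCLike 𝕂] {X : Type*} [NormedAddCommGroup X]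
    [NormedSpace 𝕂 X] (p : ℝ≥0∞) {n : ℕ} (x : Fin n → X) : ℝ :=
  ⨆ φ : {φ : X →L[𝕂] 𝕂 // ‖φ‖ ≤ 1},
    if p = ⊤ then ⨆ j : Fin n, ‖(φ : X →L[𝕂] 𝕂) (x j)‖
    else (∑ j : Fin n, ‖(φ : X →L[𝕂] 𝕂) (x j)‖ ^ p.toReal) ^ (1 / p.toReal)

/-- A continuous `m`-linear operator `T : X_1 × ⋯ × X_m → Y` is multiple
`(𝐫; 𝐩)`-summing with constant `C` if for every `n` and all finite sequences
`x^{(k)} = (x_j^{(k)})_{j=1}^n ⊆ X_k`,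
`‖ ( ‖T(x_{j_1}^{(1)},…,x_{j_m}^{(m)})‖ ) ‖_{ℓ_{𝐫}} ≤ C ∏_{k=1}^m ‖x^{(k)}‖_{w,p_k}`. -/
def IsMultipleSumming (𝕂 : Type*) [RCLike 𝕂] {m : ℕ} {X : Fin m → Type*}
    [∀ k, NormedAddCommGroup (X k)] [∀ k, NormedSpace 𝕂 (X k)]
    {Y : Type*} [NormedAddCommGroup Y] [NormedSpace 𝕂 Y]
    (T : ContinuousMultilinearMap 𝕂 X Y) (r p : Fin m → ℝ≥0∞) (C : ℝ) : Prop :=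
  ∀ (n : ℕ) (x : ∀ k : Fin m, Fin n → X k),
    mixedNormE n m r (fun js => ‖T (fun k => x k (js k))‖)
      ≤ C * ∏ k : Fin m, weakLpNormE 𝕂 (p k) (x k)


section Aux

open Finset

/-- finite `ℓ_ρ` "norm" of a real vector over a fintype, `⊤` meaning sup. -/
noncomputable def lpNF {ι : Type*} [Fintype ι] (ρ : ℝ≥0∞) (v : ι → ℝ) : ℝ :=
  if ρ = ⊤ then ⨆ i, v i else (∑ i, v i ^ ρ.toReal) ^ (1 / ρ.toReal)

variable {ι κ : Type*} [Fintype ι] [Fintype κ]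

lemma toReal_pos_of_one_le {ρ : ℝ≥0∞} (h1 : 1 ≤ ρ) (h2 : ρ ≠ ⊤) : 0 < ρ.toReal :=
  ENNReal.toReal_pos (zero_lt_one.trans_le h1).ne' h2

lemma one_le_toReal_of_one_le {ρ : ℝ≥0∞} (h1 : 1 ≤ ρ) (h2 : ρ ≠ ⊤) : 1 ≤ ρ.toReal := by
  have := ENNReal.toReal_mono h2 h1
  simpa using this

lemma lpNF_nonneg {ρ : ℝ≥0∞} {v : ι → ℝ} (hv : ∀ i, 0 ≤ v i) : 0 ≤ lpNF ρ v := by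
  unfold lpNF
  split
  · exact Real.iSup_nonneg hv
  · exact Real.rpow_nonneg (Finset.sum_nonneg fun i _ => Real.rpow_nonneg (hv i) _) _

lemma lpNF_mono {ρ : ℝ≥0∞} {u v : ι → ℝ} (hu : ∀ i, 0 ≤ u i) (h : ∀ i, u i ≤ v i) :
    lpNF ρ u ≤ lpNF ρ v := by
  unfold lpNF
  split
  · refine Real.iSup_le (fun i => (h i).trans (le_ciSup ((Set.finite_range v).bddAbove) i))
      (Real.iSup_nonneg fun i => (hu i).trans (h i))
  · refine Real.rpow_le_rpow (Finset.sum_nonneg fun i _ => Real.rpow_nonneg (hu i) _)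
      (Finset.sum_le_sum fun i _ => Real.rpow_le_rpow (hu i) (h i) ENNReal.toReal_nonneg) ?_
    positivity

lemma lpNF_congr {ρ : ℝ≥0∞} {u v : ι → ℝ} (h : ∀ i, u i = v i) : lpNF ρ u = lpNF ρ v := by
  rw [funext h]

lemma lpNF_empty [IsEmpty ι] {ρ : ℝ≥0∞} (h1 : 1 ≤ ρ) (v : ι → ℝ) : lpNF ρ v = 0 := by
  unfold lpNF
  split
  · exact Real.iSup_of_isEmpty _
  · rename_i hne
    rw [Finset.sum_of_isEmpty, Real.zero_rpow]
    exact one_div_ne_zero (ne_of_gt (toReal_pos_of_one_le h1 hne))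

lemma lpNF_anti {ρ₁ ρ₂ : ℝ≥0∞} (h1 : 1 ≤ ρ₁) (h12 : ρ₁ ≤ ρ₂) {v : ι → ℝ}
    (hv : ∀ i, 0 ≤ v i) : lpNF ρ₂ v ≤ lpNF ρ₁ v := by
  by_cases h2 : ρ₂ = ⊤
  · by_cases h1' : ρ₁ = ⊤
    · simp [h1', h2, le_refl]
    · have ha : 0 < ρ₁.toReal := toReal_pos_of_one_le h1 h1'
      rw [lpNF, if_pos h2, lpNF, if_neg h1']
      refine Real.iSup_le (fun i => ?_)
        (Real.rpow_nonneg (Finset.sum_nonneg fun i _ => Real.rpow_nonneg (hv i) _) _)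
      have h3 : v i = (v i ^ ρ₁.toReal) ^ (1 / ρ₁.toReal) := by
        rw [one_div, Real.rpow_rpow_inv (hv i) (ne_of_gt ha)]
      rw [h3]
      exact Real.rpow_le_rpow (Real.rpow_nonneg (hv i) _)
        (Finset.single_le_sum (fun j _ => Real.rpow_nonneg (hv j) _) (Finset.mem_univ i))
        (by positivity)
  · have h1' : ρ₁ ≠ ⊤ := fun h => h2 (top_le_iff.mp (h ▸ h12))
    set a := ρ₁.toReal with ha_def
    set b := ρ₂.toReal with hb_def
    have ha : 0 < a := toReal_pos_of_one_le h1 h1'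
    have hb : 0 < b := toReal_pos_of_one_le (h1.trans h12) h2
    have hab : a ≤ b := by
      rw [ha_def, hb_def]
      exact ENNReal.toReal_mono h2 h12
    rw [lpNF, if_neg h2, lpNF, if_neg h1']
    set M := (∑ i, v i ^ a) ^ (1 / a) with hM_def
    have hM0 : 0 ≤ M := Real.rpow_nonneg (Finset.sum_nonneg fun i _ => Real.rpow_nonneg (hv i) _) _
    rcases eq_or_lt_of_le hM0 with hM | hM
    · -- M = 0 : all v i = 0
      have hsum : ∑ i, v i ^ a = 0 := by
        have := hM.symm
        rw [hM_def] at this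
        rwa [Real.rpow_eq_zero (Finset.sum_nonneg fun i _ => Real.rpow_nonneg (hv i) _)
          (by positivity)] at this
      have hvz : ∀ i, v i = 0 := by
        intro i
        have h0 : v i ^ a = 0 := by
          have := Finset.sum_eq_zero_iff_of_nonneg
            (fun j _ => Real.rpow_nonneg (hv j) a) |>.mp hsum i (Finset.mem_univ i)
          exact this
        rwa [Real.rpow_eq_zero (hv i) (ne_of_gt ha)] at h0
      have : ∀ i, v i ^ b = 0 := fun i => by
        rw [hvz i]; exact Real.zero_rpow (ne_of_gt hb)
      rw [Finset.sum_congr rfl fun i _ => this i]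
      simp only [Finset.sum_const, smul_zero]
      rw [Real.zero_rpow (by positivity)]
      exact hM.le
    · -- M > 0
      have hvle : ∀ i, v i ≤ M := by
        intro i
        have h3 : v i = (v i ^ a) ^ (1 / a) := by
          rw [one_div, Real.rpow_rpow_inv (hv i) (ne_of_gt ha)]
        rw [h3, hM_def]
        exact Real.rpow_le_rpow (Real.rpow_nonneg (hv i) _)
          (Finset.single_le_sum (fun j _ => Real.rpow_nonneg (hv j) _) (Finset.mem_univ i))
          (by positivity)
      have key : ∑ i, v i ^ b ≤ M ^ b := by
        have step : ∀ i, v i ^ b ≤ M ^ b * (v i / M) ^ a := by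
          intro i
          have hdecomp : v i ^ b = M ^ b * (v i / M) ^ b := by
            rw [Real.div_rpow (hv i) hM0]
            field_simp
          rw [hdecomp]
          refine mul_le_mul_of_nonneg_left ?_ (Real.rpow_nonneg hM0 _)
          rcases eq_or_lt_of_le (hv i) with hvi | hvi
          · rw [← hvi, zero_div, Real.zero_rpow (ne_of_gt hb), Real.zero_rpow (ne_of_gt ha)]
          · exact Real.rpow_le_rpow_of_exponent_ge (by positivity)
              ((div_le_one hM).mpr (hvle i)) hab
        calc ∑ i, v i ^ b ≤ ∑ i, M ^ b * (v i / M) ^ a :=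
              Finset.sum_le_sum fun i _ => step i
          _ = M ^ b * ∑ i, (v i / M) ^ a := by rw [Finset.mul_sum]
          _ ≤ M ^ b * 1 := by
              refine mul_le_mul_of_nonneg_left ?_ (Real.rpow_nonneg hM0 _)
              have : ∑ i, (v i / M) ^ a = (∑ i, v i ^ a) / M ^ a := by
                rw [Finset.sum_div]
                exact Finset.sum_congr rfl fun i _ => Real.div_rpow (hv i) hM0 a
              rw [this, div_le_one (by positivity)]
              have : M ^ a = ∑ i, v i ^ a := by
                rw [hM_def, one_div, Real.rpow_inv_rpow
                  (Finset.sum_nonneg fun i _ => Real.rpow_nonneg (hv i) _) (ne_of_gt ha)]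
              rw [this]
          _ = M ^ b := mul_one _
      calc (∑ i, v i ^ b) ^ (1 / b) ≤ (M ^ b) ^ (1 / b) :=
            Real.rpow_le_rpow (Finset.sum_nonneg fun i _ => Real.rpow_nonneg (hv i) _) key
              (by positivity)
        _ = M := by rw [one_div, Real.rpow_rpow_inv hM0 (ne_of_gt hb)]

lemma lpNF_const_mul {ρ : ℝ≥0∞} {t : ℝ} (ht : 0 ≤ t) {v : ι → ℝ} (hv : ∀ i, 0 ≤ v i)
    (h1 : 1 ≤ ρ) : lpNF ρ (fun i => t * v i) = t * lpNF ρ v := by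
  unfold lpNF
  split
  · -- sup case
    rcases isEmpty_or_nonempty ι with hι | hι
    · simp [Real.iSup_of_isEmpty]
    rcases eq_or_lt_of_le ht with ht0 | ht0
    · simp [← ht0, ciSup_const]
    apply le_antisymm
    · refine ciSup_le fun i => ?_
      exact mul_le_mul_of_nonneg_left (le_ciSup ((Set.finite_range v).bddAbove) i) ht
    · rw [← le_div_iff₀' ht0]
      refine ciSup_le fun i => ?_
      rw [le_div_iff₀' ht0]
      exact le_ciSup ((Set.finite_range fun i => t * v i).bddAbove) i
  · rename_i hne
    have ha : 0 < ρ.toReal := toReal_pos_of_one_le h1 hne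
    have : ∀ i, (t * v i) ^ ρ.toReal = t ^ ρ.toReal * v i ^ ρ.toReal := fun i =>
      Real.mul_rpow ht (hv i)
    rw [Finset.sum_congr rfl fun i _ => this i, ← Finset.mul_sum,
      Real.mul_rpow (Real.rpow_nonneg ht _)
        (Finset.sum_nonneg fun i _ => Real.rpow_nonneg (hv i) _),
      one_div, Real.rpow_rpow_inv ht (ne_of_gt ha)]

lemma lpNF_reindex {ρ : ℝ≥0∞} (e : κ ≃ ι) (v : ι → ℝ) :
    lpNF ρ (fun k => v (e k)) = lpNF ρ v := by
  unfold lpNF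
  split
  · have : Set.range (fun k => v (e k)) = Set.range v := e.surjective.range_comp v
    rw [iSup, iSup, this]
  · rw [Equiv.sum_comp e (fun i => v i ^ ρ.toReal)]

lemma real_iSup_prod [Nonempty ι] [Nonempty κ] (u : ι × κ → ℝ) :
    ⨆ p : ι × κ, u p = ⨆ k : κ, ⨆ i : ι, u (i, k) := by
  apply le_antisymm
  · refine ciSup_le fun p => ?_
    calc u p = u (p.1, p.2) := by rw [Prod.mk.eta]
      _ ≤ ⨆ i : ι, u (i, p.2) := le_ciSup (f := fun i : ι => u (i, p.2)) ((Set.finite_range _).bddAbove) p.1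
      _ ≤ ⨆ k : κ, ⨆ i : ι, u (i, k) := le_ciSup (f := fun k => ⨆ i : ι, u (i, k)) ((Set.finite_range _).bddAbove) p.2
  · refine ciSup_le fun k => ciSup_le fun i => ?_
    exact le_ciSup ((Set.finite_range u).bddAbove) (i, k)

lemma lpNF_prod [Nonempty ι] [Nonempty κ] {ρ : ℝ≥0∞} (h1 : 1 ≤ ρ) (u : ι × κ → ℝ)
    (hu : ∀ p, 0 ≤ u p) :
    lpNF ρ u = lpNF ρ (fun k : κ => lpNF ρ (fun i : ι => u (i, k))) := by
  unfold lpNF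
  split
  · exact real_iSup_prod u
  · rename_i hne
    have ha : 0 < ρ.toReal := toReal_pos_of_one_le h1 hne
    have inner : ∀ k : κ, ((∑ i, u (i, k) ^ ρ.toReal) ^ (1 / ρ.toReal)) ^ ρ.toReal
        = ∑ i, u (i, k) ^ ρ.toReal := by
      intro k
      rw [one_div, Real.rpow_inv_rpow
        (Finset.sum_nonneg fun i _ => Real.rpow_nonneg (hu _) _) (ne_of_gt ha)]
    rw [Finset.sum_congr rfl fun k _ => inner k]
    congr 1
    rw [Fintype.sum_prod_type]
    exact Finset.sum_comm

/-- Optimal dual weights: base case of the weight construction. -/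
lemma lpNF_dual [Nonempty ι] {b : ℝ} (hb : 1 ≤ b) {σ : ℝ≥0∞} (hσ : 1 ≤ σ) {c : ℝ}
    (hc : 0 ≤ c) (hrel : (σ⁻¹).toReal = 1 / b - c) (v : ι → ℝ) (hv : ∀ i, 0 ≤ v i) :
    ∃ lam : ι → ℝ, (∀ i, 0 ≤ lam i) ∧ (c = 0 → ∀ i, lam i ≤ 1) ∧
      (c ≠ 0 → ∑ i, lam i ^ (1 / c) ≤ 1) ∧
      lpNF σ v ≤ (∑ i, (lam i * v i) ^ b) ^ (1 / b) := by
  classical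
  have hb0 : 0 < b := lt_of_lt_of_le zero_lt_one hb
  by_cases hc0 : c = 0
  · -- σ = b as reals; take lam = 1
    subst hc0
    have hσne : σ ≠ ⊤ := by
      intro h
      rw [h] at hrel
      simp at hrel
      have : (0:ℝ) < 1 / b := by positivity
      rw [← hrel] at this
      simpa using this
    have hσb : σ.toReal = b := by
      have h1 : σ.toReal⁻¹ = b⁻¹ := by
        rw [← ENNReal.toReal_inv, hrel]
        simp [one_div]
      have h2 : 0 < σ.toReal := toReal_pos_of_one_le hσ hσne
      field_simp at h1
      linarith
    refine ⟨fun _ => 1, fun _ => zero_le_one, fun _ _ => le_refl 1, fun h => absurd rfl h, ?_⟩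
    rw [lpNF, if_neg hσne, hσb]
    simp only [one_mul]
    exact le_refl _
  · have hcpos : 0 < c := lt_of_le_of_ne hc (Ne.symm hc0)
    by_cases hσtop : σ = ⊤
    · -- sup case; lam = indicator of argmax
      obtain ⟨i₀, _, hmax⟩ := Finset.exists_max_image Finset.univ v Finset.univ_nonempty
      refine ⟨fun i => if i = i₀ then 1 else 0, fun i => by dsimp only; split <;> norm_num,
        fun h => absurd h hc0, fun _ => ?_, ?_⟩
      · have hind : ∀ i : ι, (if i = i₀ then (1:ℝ) else 0) ^ (1/c) = if i = i₀ then 1 else 0 := by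
          intro i
          split
          · exact Real.one_rpow _
          · exact Real.zero_rpow (by positivity)
        rw [Finset.sum_congr rfl (fun i _ => hind i)]
        simp
      · rw [lpNF, if_pos hσtop]
        have hsum : ∑ i, ((if i = i₀ then (1:ℝ) else 0) * v i) ^ b = v i₀ ^ b := by
          rw [Finset.sum_eq_single i₀]
          · simp
          · intro i _ hne
            rw [if_neg hne, zero_mul, Real.zero_rpow (ne_of_gt hb0)]
          · intro h; exact absurd (Finset.mem_univ i₀) h
        rw [hsum, one_div, Real.rpow_rpow_inv (hv i₀) (ne_of_gt hb0)]
        exact ciSup_le fun i => hmax i (Finset.mem_univ i)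
    · -- finite σ
      set a := σ.toReal with ha_def
      have ha0 : 0 < a := toReal_pos_of_one_le hσ hσtop
      have hainv : a⁻¹ = 1 / b - c := by rw [ha_def, ← ENNReal.toReal_inv, hrel]
      set M := (∑ i, v i ^ a) ^ (1 / a) with hM_def
      have hsum_nonneg : (0:ℝ) ≤ ∑ i, v i ^ a :=
        Finset.sum_nonneg fun i _ => Real.rpow_nonneg (hv i) _
      have hM0 : 0 ≤ M := Real.rpow_nonneg hsum_nonneg _
      have hlp : lpNF σ v = M := by rw [lpNF, if_neg hσtop]
      rcases eq_or_lt_of_le hM0 with hM | hM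
      · refine ⟨fun _ => 0, fun _ => le_refl 0, fun h => absurd h hc0, fun _ => ?_, ?_⟩
        · rw [Finset.sum_congr rfl (fun i _ => Real.zero_rpow (one_div_ne_zero (ne_of_gt hcpos)))]
          simp
        · rw [hlp, ← hM]
          refine Real.rpow_nonneg (Finset.sum_nonneg fun i _ => Real.rpow_nonneg ?_ _) _
          simp
      · have hMa : M ^ a = ∑ i, v i ^ a := by
          rw [hM_def, one_div, Real.rpow_inv_rpow hsum_nonneg (ne_of_gt ha0)]
        refine ⟨fun i => (v i / M) ^ (a * c), fun i => Real.rpow_nonneg (div_nonneg (hv i) hM0) _,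
          fun h => absurd h hc0, fun _ => ?_, ?_⟩
        · have : ∀ i, ((v i / M) ^ (a * c)) ^ (1 / c) = (v i / M) ^ a := by
            intro i
            rw [← Real.rpow_mul (div_nonneg (hv i) hM0)]
            congr 1
            field_simp
          rw [Finset.sum_congr rfl fun i _ => this i]
          have : ∀ i, (v i / M) ^ a = v i ^ a / M ^ a := fun i => Real.div_rpow (hv i) hM0 a
          rw [Finset.sum_congr rfl fun i _ => this i, ← Finset.sum_div, ← hMa,
            div_self (by positivity)]
        · -- the main computation
          have hbr : b = a - a * b * c := by
            have h1 : b * (a⁻¹ + c) = 1 := by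
              rw [hainv]; field_simp; ring
            have h2 : b * a⁻¹ + b * c = 1 := by rw [← h1]; ring
            have h3 : a * (b * a⁻¹ + b * c) = a := by rw [h2, mul_one]
            have h4 : a * (b * a⁻¹) = b := by
              field_simp
            nlinarith [h3, h4]
          have hterm : ∀ i, ((v i / M) ^ (a * c) * v i) ^ b = v i ^ a / M ^ (a * c * b) := by
            intro i
            have e1 : (v i / M) ^ (a * c) * v i = (v i ^ (a * c) * v i) / M ^ (a * c) := by
              rw [Real.div_rpow (hv i) hM0]
              ring
            rw [e1, Real.div_rpow (mul_nonneg (Real.rpow_nonneg (hv i) _) (hv i)) (Real.rpow_nonneg hM0 _)]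
            have e2 : (v i ^ (a * c) * v i) ^ b = v i ^ ((a * c + 1) * b) := by
              rw [show v i ^ (a*c) * v i = v i ^ (a*c+1) by
                  rw [Real.rpow_add' (hv i) (by positivity), Real.rpow_one],
                ← Real.rpow_mul (hv i)]
            have e3 : (M ^ (a * c)) ^ b = M ^ (a * c * b) := by
              rw [← Real.rpow_mul hM0]
            rw [e2, e3]
            have hexp : (a * c + 1) * b = a := by nlinarith [hbr]
            rw [hexp]
          rw [hlp, Finset.sum_congr rfl fun i _ => hterm i, ← Finset.sum_div, ← hMa]
          have : M ^ a / M ^ (a * c * b) = M ^ b := by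
            rw [← Real.rpow_sub hM]
            congr 1
            linarith [hbr]
          rw [this, one_div, Real.rpow_rpow_inv hM0 (ne_of_gt hb0)]

/-- Scalar Hölder for the weighted `ℓ_p`-expression. -/
lemma lpNF_holder [Nonempty ι] (p q : ℝ≥0∞) (hp : 1 ≤ p) (hq : 1 ≤ q) {c : ℝ} (hc : 0 ≤ c)
    (hrel : (p⁻¹).toReal = c + (q⁻¹).toReal) (lam u : ι → ℝ) (hlam : ∀ i, 0 ≤ lam i)
    (hu : ∀ i, 0 ≤ u i) (hl1 : c = 0 → ∀ i, lam i ≤ 1)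
    (hl2 : c ≠ 0 → ∑ i, lam i ^ (1 / c) ≤ 1) :
    lpNF p (fun i => lam i * u i) ≤ lpNF q u := by
  have hqinv : (q⁻¹).toReal = q.toReal⁻¹ := ENNReal.toReal_inv q
  have hpinv : (p⁻¹).toReal = p.toReal⁻¹ := ENNReal.toReal_inv p
  by_cases hptop : p = ⊤
  · -- then c = 0 and q = ⊤
    have h0 : (p⁻¹).toReal = 0 := by rw [hptop]; simp
    have hc0 : c = 0 := by
      have := hrel; rw [h0] at this
      have h2 : (0:ℝ) ≤ (q⁻¹).toReal := ENNReal.toReal_nonneg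
      linarith
    have hq0 : (q⁻¹).toReal = 0 := by rw [hrel, hc0] at h0; linarith
    have hqtop : q = ⊤ := by
      rcases (ENNReal.toReal_eq_zero_iff _).mp hq0 with h | h
      · exact ENNReal.inv_eq_zero.mp h
      · exact absurd h (by
          intro hh
          have : q = 0 := ENNReal.inv_eq_top.mp hh
          rw [this] at hq
          simp at hq)
    rw [lpNF, if_pos hptop, lpNF, if_pos hqtop]
    refine Real.iSup_le (fun i => ?_) (Real.iSup_nonneg fun i => hu i)
    calc lam i * u i ≤ 1 * u i := mul_le_mul_of_nonneg_right (hl1 hc0 i) (hu i)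
      _ = u i := one_mul _
      _ ≤ ⨆ j, u j := le_ciSup ((Set.finite_range u).bddAbove) i
  · set a := p.toReal with ha_def
    have ha0 : 0 < a := toReal_pos_of_one_le hp hptop
    rw [lpNF, if_neg hptop]
    by_cases hc0 : c = 0
    · -- p = q (as toReal)
      have hq0 : (q⁻¹).toReal = (p⁻¹).toReal := by rw [hrel, hc0]; ring
      have hqtop' : q ≠ ⊤ := by
        intro h
        rw [h] at hq0
        simp only [ENNReal.inv_top, ENNReal.toReal_zero] at hq0
        have hp0 : p⁻¹ = 0 := by
          rcases (ENNReal.toReal_eq_zero_iff _).mp hq0.symm with h' | h'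
          · exact h'
          · exact absurd (ENNReal.inv_eq_top.mp h')
              (by intro hh; rw [hh] at hp; simp at hp)
        exact hptop (ENNReal.inv_eq_zero.mp hp0)
      have hqa : q.toReal = a := by
        have h1 := hq0
        rw [hqinv, hpinv] at h1
        exact inv_injective h1
      rw [lpNF, if_neg hqtop', hqa]
      refine Real.rpow_le_rpow (Finset.sum_nonneg fun i _ =>
          Real.rpow_nonneg (mul_nonneg (hlam i) (hu i)) _)
        (Finset.sum_le_sum fun i _ => ?_) (by positivity)
      refine Real.rpow_le_rpow (mul_nonneg (hlam i) (hu i)) ?_ (le_of_lt ha0)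
      calc lam i * u i ≤ 1 * u i := mul_le_mul_of_nonneg_right (hl1 hc0 i) (hu i)
        _ = u i := one_mul _
    · have hcpos : 0 < c := lt_of_le_of_ne hc (Ne.symm hc0)
      by_cases hqtop : q = ⊤
      · -- c = 1/a
        have hq0 : (q⁻¹).toReal = 0 := by rw [hqtop]; simp
        have hca : c = a⁻¹ := by rw [hpinv] at hrel; rw [hq0] at hrel; linarith
        rw [lpNF, if_pos hqtop]
        have hsupnn : 0 ≤ ⨆ j, u j := Real.iSup_nonneg hu
        have hterm : ∀ i, (lam i * u i) ^ a ≤ lam i ^ a * (⨆ j, u j) ^ a := by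
          intro i
          rw [Real.mul_rpow (hlam i) (hu i)]
          exact mul_le_mul_of_nonneg_left
            (Real.rpow_le_rpow (hu i) (le_ciSup ((Set.finite_range u).bddAbove) i) ha0.le)
            (Real.rpow_nonneg (hlam i) _)
        have hlam_sum : ∑ i, lam i ^ a ≤ 1 := by
          have := hl2 hc0
          rwa [show (1:ℝ)/c = a by rw [hca]; field_simp] at this
        calc (∑ i, (lam i * u i) ^ a) ^ (1/a)
            ≤ (∑ i, lam i ^ a * (⨆ j, u j) ^ a) ^ (1/a) := by
              refine Real.rpow_le_rpow
                (Finset.sum_nonneg fun i _ => Real.rpow_nonneg (mul_nonneg (hlam i) (hu i)) _)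
                (Finset.sum_le_sum fun i _ => hterm i) (by positivity)
          _ ≤ ((⨆ j, u j) ^ a) ^ (1/a) := by
              refine Real.rpow_le_rpow
                (Finset.sum_nonneg fun i _ => mul_nonneg (Real.rpow_nonneg (hlam i) _)
                  (Real.rpow_nonneg hsupnn _)) ?_ (by positivity)
              rw [← Finset.sum_mul]
              calc (∑ i, lam i ^ a) * (⨆ j, u j) ^ a ≤ 1 * (⨆ j, u j) ^ a :=
                    mul_le_mul_of_nonneg_right hlam_sum (Real.rpow_nonneg hsupnn _)
                _ = (⨆ j, u j) ^ a := one_mul _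
          _ = ⨆ j, u j := by rw [one_div, Real.rpow_rpow_inv hsupnn (ne_of_gt ha0)]
      · -- both finite: genuine Hölder
        set b := q.toReal with hb_def
        have hb0 : 0 < b := toReal_pos_of_one_le hq hqtop
        have hab : a⁻¹ = c + b⁻¹ := by
          rw [hpinv, hqinv] at hrel; exact hrel
        have hca : c * a < 1 := by
          have h1 : c < a⁻¹ := by
            have hbinv : 0 < b⁻¹ := by positivity
            linarith [hab]
          calc c * a < a⁻¹ * a := mul_lt_mul_of_pos_right h1 ha0
            _ = 1 := inv_mul_cancel₀ (ne_of_gt ha0)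
        have hconj : Real.HolderConjugate (1 / (c * a)) (b / a) := by
          rw [Real.holderConjugate_iff]
          constructor
          · rw [one_div, lt_inv_comm₀ zero_lt_one (by positivity)]
            simpa using hca
          · rw [one_div, inv_inv, inv_div]
            calc c * a + a / b = a * (c + b⁻¹) := by ring
              _ = a * a⁻¹ := by rw [← hab]
              _ = 1 := mul_inv_cancel₀ (ne_of_gt ha0)
        have holder := Real.inner_le_Lp_mul_Lq_of_nonneg Finset.univ hconj
          (f := fun i => lam i ^ a) (g := fun i => u i ^ a)
          (fun i _ => Real.rpow_nonneg (hlam i) _) (fun i _ => Real.rpow_nonneg (hu i) _)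
        have e1 : ∀ i, (lam i ^ a) ^ (1 / (c * a)) = lam i ^ (1 / c) := by
          intro i
          rw [← Real.rpow_mul (hlam i)]
          congr 1
          field_simp
        have e2 : ∀ i, (u i ^ a) ^ (b / a) = u i ^ b := by
          intro i
          rw [← Real.rpow_mul (hu i)]
          congr 1
          field_simp
        have e3 : ∀ i, (lam i * u i) ^ a = lam i ^ a * u i ^ a := fun i =>
          Real.mul_rpow (hlam i) (hu i)
        rw [Finset.sum_congr rfl fun i _ => e1 i, Finset.sum_congr rfl fun i _ => e2 i] at holder
        have hfac : (∑ i, lam i ^ (1/c)) ^ (1 / (1 / (c * a))) ≤ 1 := by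
          refine Real.rpow_le_one (Finset.sum_nonneg fun i _ => Real.rpow_nonneg (hlam i) _)
            (hl2 hc0) (by positivity)
        have hsum : ∑ i, (lam i * u i) ^ a ≤ (∑ i, u i ^ b) ^ (1 / (b / a)) := by
          rw [Finset.sum_congr rfl fun i _ => e3 i]
          calc ∑ i, lam i ^ a * u i ^ a
              ≤ (∑ i, lam i ^ (1/c)) ^ (1 / (1 / (c * a))) * (∑ i, u i ^ b) ^ (1 / (b / a)) :=
                holder
            _ ≤ 1 * (∑ i, u i ^ b) ^ (1 / (b / a)) :=
                mul_le_mul_of_nonneg_right hfac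
                  (Real.rpow_nonneg (Finset.sum_nonneg fun i _ => Real.rpow_nonneg (hu i) _) _)
            _ = (∑ i, u i ^ b) ^ (1 / (b / a)) := one_mul _
        rw [lpNF, if_neg hqtop, ← hb_def]
        calc (∑ i, (lam i * u i) ^ a) ^ (1/a)
            ≤ ((∑ i, u i ^ b) ^ (1 / (b / a))) ^ (1/a) := by
              refine Real.rpow_le_rpow
                (Finset.sum_nonneg fun i _ => Real.rpow_nonneg (mul_nonneg (hlam i) (hu i)) _)
                hsum (by positivity)
          _ = (∑ i, u i ^ b) ^ (1/b) := by
              rw [← Real.rpow_mul (Finset.sum_nonneg fun i _ => Real.rpow_nonneg (hu i) _)]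
              congr 1
              field_simp

lemma mixedNormE_zero (n : ℕ) (r : Fin 0 → ℝ≥0∞) (f : (Fin 0 → Fin n) → ℝ) :
    mixedNormE n 0 r f = f Fin.elim0 := rfl

lemma mixedNormE_succ (n m : ℕ) (r : Fin (m+1) → ℝ≥0∞) (f : (Fin (m+1) → Fin n) → ℝ) :
    mixedNormE n (m+1) r f
      = lpNF (r 0) (fun j => mixedNormE n m (fun i => r i.succ)
          (fun js => f (Fin.cons j js))) := rfl

lemma mixedNormE_congr (n m : ℕ) {r r' : Fin m → ℝ≥0∞} {f f' : (Fin m → Fin n) → ℝ}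
    (hr : ∀ i, r i = r' i) (hf : ∀ js, f js = f' js) :
    mixedNormE n m r f = mixedNormE n m r' f' := by
  rw [show r = r' from funext hr, show f = f' from funext hf]

lemma mixedNormE_nonneg (n : ℕ) : ∀ (m : ℕ) (r : Fin m → ℝ≥0∞) (f : (Fin m → Fin n) → ℝ),
    (∀ js, 0 ≤ f js) → 0 ≤ mixedNormE n m r f := by
  intro m
  induction m with
  | zero => intro r f hf; exact hf _
  | succ m ih =>
    intro r f hf
    rw [mixedNormE_succ]
    exact lpNF_nonneg fun j => ih _ _ fun js => hf _

/-- the equivalence `(tail, head) ≃ cons`. -/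
def consEquiv (n m : ℕ) : ((Fin m → Fin n) × Fin n) ≃ (Fin (m+1) → Fin n) where
  toFun p := Fin.cons p.2 p.1
  invFun g := (Fin.tail g, g 0)
  left_inv p := by simp [Fin.tail_cons]
  right_inv g := Fin.cons_self_tail g

/-- the equivalence `(init, last) ≃ snoc`. -/
def snocEquiv (n m : ℕ) : ((Fin m → Fin n) × Fin n) ≃ (Fin (m+1) → Fin n) where
  toFun p := Fin.snoc p.1 p.2
  invFun g := (Fin.init g, g (Fin.last m))
  left_inv p := by simp [Fin.init_snoc, Fin.snoc_last]
  right_inv g := Fin.snoc_init_self g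

/-- peel the innermost coordinate of a mixed norm. -/
lemma mixedNormE_snoc (n : ℕ) : ∀ (m : ℕ) (s : Fin (m+1) → ℝ≥0∞) (f : (Fin (m+1) → Fin n) → ℝ),
    mixedNormE n (m+1) s f
      = mixedNormE n m (fun k => s k.castSucc)
          (fun js => lpNF (s (Fin.last m)) (fun j => f (Fin.snoc js j))) := by
  intro m
  induction m with
  | zero =>
    intro s f
    rw [mixedNormE_succ, mixedNormE_zero]
    have h0 : s (Fin.last 0) = s 0 := rfl
    rw [h0]
    apply lpNF_congr
    intro j
    rw [mixedNormE_zero]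
    congr 1
    funext i
    rw [Fin.fin_one_eq_zero i]
    rfl
  | succ m ih =>
    intro s f
    rw [mixedNormE_succ, mixedNormE_succ]
    simp only [Fin.castSucc_zero]
    apply lpNF_congr
    intro j
    rw [ih (fun i => s i.succ) (fun js => f (Fin.cons j js))]
    apply mixedNormE_congr
    · intro i
      rw [Fin.succ_castSucc]
    · intro js
      have hlast : s (Fin.last m).succ = s (Fin.last (m+1)) := by rw [Fin.succ_last]
      rw [hlast]
      apply lpNF_congr
      intro j'
      congr 1
      exact Fin.cons_snoc_eq_snoc_cons j js j'

/-- constant-exponent mixed norms flatten to a global `ℓ_ρ` norm. -/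
lemma mixedNormE_flat (n : ℕ) (hn : n ≠ 0) :
    ∀ (m : ℕ) (ρ : ℝ≥0∞), 1 ≤ ρ → ∀ (f : (Fin m → Fin n) → ℝ), (∀ js, 0 ≤ f js) →
    mixedNormE n m (fun _ => ρ) f = lpNF ρ f := by
  haveI : Nonempty (Fin n) := ⟨⟨0, Nat.pos_of_ne_zero hn⟩⟩
  intro m
  induction m with
  | zero =>
    intro ρ hρ f hf
    rw [mixedNormE_zero]
    unfold lpNF
    have hd : f default = f Fin.elim0 := congrArg f (Subsingleton.elim _ _)
    split
    · rw [ciSup_unique (s := f), hd]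
    · rename_i hne
      have ha : 0 < ρ.toReal := toReal_pos_of_one_le hρ hne
      rw [Fintype.sum_unique (fun js => f js ^ ρ.toReal), hd,
        one_div, Real.rpow_rpow_inv (hf _) (ne_of_gt ha)]
  | succ m ih =>
    intro ρ hρ f hf
    haveI : Nonempty (Fin m → Fin n) := ⟨fun _ => Classical.arbitrary _⟩
    rw [mixedNormE_succ]
    have h1 : ∀ j : Fin n, mixedNormE n m (fun i => ρ) (fun js => f (Fin.cons j js))
        = lpNF ρ (fun js => f (Fin.cons j js)) := fun j => ih ρ hρ _ (fun js => hf _)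
    rw [lpNF_congr h1]
    rw [← lpNF_reindex (consEquiv n m) f]
    rw [lpNF_prod hρ (fun p => f ((consEquiv n m) p)) (fun p => hf _)]
    rfl

/-- **Key weight construction**: the mixed `s`-norm is dominated by the isotropic
`base`-norm of a suitably weighted function, with product weights of controlled norms. -/
lemma key_weights (n : ℕ) (hn : n ≠ 0) :
    ∀ (m : ℕ) (base : ℝ≥0∞), 1 ≤ base →
    ∀ (s : Fin m → ℝ≥0∞) (c : Fin m → ℝ), (∀ k, 1 ≤ s k) → (∀ k, 0 ≤ c k) →
    (∀ k, ((s k)⁻¹).toReal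
        = (base⁻¹).toReal - ∑ i ∈ Finset.univ.filter (fun i : Fin m => k ≤ i), c i) →
    ∀ (f : (Fin m → Fin n) → ℝ), (∀ js, 0 ≤ f js) →
    ∃ lam : Fin m → Fin n → ℝ,
      (∀ k j, 0 ≤ lam k j) ∧
      (∀ k, (c k = 0 → ∀ j, lam k j ≤ 1) ∧ (c k ≠ 0 → ∑ j, lam k j ^ (1 / c k) ≤ 1)) ∧
      mixedNormE n m s f
        ≤ mixedNormE n m (fun _ => base) (fun js => (∏ k, lam k (js k)) * f js) := by
  haveI : Nonempty (Fin n) := ⟨⟨0, Nat.pos_of_ne_zero hn⟩⟩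
  intro m
  induction m with
  | zero =>
    intro base hbase s c hs hc hrel f hf
    exact ⟨Fin.elim0, fun k => k.elim0, fun k => k.elim0, by simp [mixedNormE_zero]⟩
  | succ m ih =>
    intro base hbase s c hs hc hrel f hf
    haveI : Nonempty (Fin m → Fin n) := ⟨fun _ => Classical.arbitrary _⟩
    by_cases hbtop : base = ⊤
    · -- degenerate case: everything is `⊤`, all `c` vanish
      have hsum0 : ∀ k : Fin (m+1),
          ∑ i ∈ Finset.univ.filter (fun i : Fin (m+1) => k ≤ i), c i = 0 := by
        intro k
        have h1 := hrel k
        rw [hbtop] at h1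
        simp only [ENNReal.inv_top, ENNReal.toReal_zero, zero_sub] at h1
        have h2 : 0 ≤ ((s k)⁻¹).toReal := ENNReal.toReal_nonneg
        have h3 : 0 ≤ ∑ i ∈ Finset.univ.filter (fun i : Fin (m+1) => k ≤ i), c i :=
          Finset.sum_nonneg fun i _ => hc i
        linarith
      have hck : ∀ k, c k = 0 := by
        intro k
        have h1 : c k ≤ ∑ i ∈ Finset.univ.filter (fun i : Fin (m+1) => k ≤ i), c i :=
          Finset.single_le_sum (fun i _ => hc i)
            (Finset.mem_filter.mpr ⟨Finset.mem_univ k, le_refl k⟩)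
        have := hsum0 k
        linarith [hc k]
      have hstop : ∀ k, s k = ⊤ := by
        intro k
        have h1 := hrel k
        rw [hbtop, hsum0 k] at h1
        simp only [ENNReal.inv_top, ENNReal.toReal_zero, sub_zero] at h1
        rcases (ENNReal.toReal_eq_zero_iff _).mp h1 with h | h
        · exact ENNReal.inv_eq_zero.mp h
        · exact absurd (ENNReal.inv_eq_top.mp h)
            (by intro hh; have h2 := hs k; rw [hh] at h2; simpa using h2)
      refine ⟨fun _ _ => 1, fun _ _ => zero_le_one,
        fun k => ⟨fun _ _ => le_refl 1, fun hne => absurd (hck k) hne⟩, ?_⟩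
      have heq : mixedNormE n (m+1) s f
          = mixedNormE n (m+1) (fun _ => base) (fun js => (∏ _k : Fin (m+1), (1:ℝ)) * f js) :=
        mixedNormE_congr n (m+1) (fun i => by rw [hstop i, hbtop]) (fun js => by simp)
      rw [heq]
    · -- main case: `base` finite
      set b := base.toReal with hb_def
      have hb0 : 0 < b := toReal_pos_of_one_le hbase hbtop
      have hb1 : 1 ≤ b := one_le_toReal_of_one_le hbase hbtop
      have hsm : 1 ≤ s (Fin.last m) := hs _
      have hcm : 0 ≤ c (Fin.last m) := hc _
      -- sum splitting over the last coordinate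
      have hsplit : ∀ k : Fin m,
          (∑ i ∈ Finset.univ.filter (fun i : Fin (m+1) => k.castSucc ≤ i), c i)
            = c (Fin.last m)
              + ∑ i ∈ Finset.univ.filter (fun i : Fin m => k ≤ i), c i.castSucc := by
        intro k
        rw [Finset.sum_filter, Finset.sum_filter,
          Fin.sum_univ_castSucc (f := fun i : Fin (m+1) => if k.castSucc ≤ i then c i else 0)]
        simp only [Fin.castSucc_le_castSucc_iff]
        rw [if_pos (Fin.le_last _)]
        ring
      have hrel_last : ((s (Fin.last m))⁻¹).toReal = 1 / b - c (Fin.last m) := by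
        have h := hrel (Fin.last m)
        have hfilter : Finset.univ.filter (fun i : Fin (m+1) => Fin.last m ≤ i)
            = {Fin.last m} := by
          ext i
          simp [Fin.last_le_iff, eq_comm]
        rw [hfilter, Finset.sum_singleton] at h
        rw [h, ENNReal.toReal_inv, one_div]
      have hsm_ne : s (Fin.last m) ≠ 0 := (zero_lt_one.trans_le hsm).ne'
      have hbase_ne : base ≠ 0 := (zero_lt_one.trans_le hbase).ne'
      have hbsm : base ≤ s (Fin.last m) := by
        have h1 : ((s (Fin.last m))⁻¹).toReal ≤ (base⁻¹).toReal := by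
          rw [hrel_last, ENNReal.toReal_inv, ← hb_def, one_div]
          linarith
        have h2 : (s (Fin.last m))⁻¹ ≤ base⁻¹ :=
          (ENNReal.toReal_le_toReal (ENNReal.inv_ne_top.mpr hsm_ne)
            (ENNReal.inv_ne_top.mpr hbase_ne)).mp h1
        exact ENNReal.inv_le_inv.mp h2
      -- the inner norms
      set B : (Fin m → Fin n) → ℝ
        := fun js => lpNF (s (Fin.last m)) (fun j => f (Fin.snoc js j)) with hB_def
      have hBnn : ∀ js, 0 ≤ B js := fun js => lpNF_nonneg (fun j => hf _)
      have hrel' : ∀ k : Fin m, ((s k.castSucc)⁻¹).toReal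
          = ((s (Fin.last m))⁻¹).toReal
            - ∑ i ∈ Finset.univ.filter (fun i : Fin m => k ≤ i), c i.castSucc := by
        intro k
        have h1 := hrel k.castSucc
        rw [hsplit k] at h1
        rw [h1, hrel_last, ENNReal.toReal_inv, one_div]
        ring
      obtain ⟨lam', hlam'nn, hlam'cond, hIH⟩ := ih (s (Fin.last m)) hsm
        (fun k => s k.castSucc) (fun k => c k.castSucc) (fun k => hs _) (fun k => hc _)
        hrel' B hBnn
      set w : (Fin m → Fin n) → ℝ := fun js => ∏ k, lam' k (js k) with hw_def
      have hwnn : ∀ js, 0 ≤ w js := fun js => Finset.prod_nonneg (fun k _ => hlam'nn k _)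
      set h : (Fin (m+1) → Fin n) → ℝ := fun js => w (Fin.init js) * f js with hh_def
      have hhnn : ∀ js, 0 ≤ h js := fun js => mul_nonneg (hwnn _) (hf _)
      have hB2 : mixedNormE n m (fun _ => s (Fin.last m)) (fun js => w js * B js)
          = lpNF (s (Fin.last m)) h := by
        have e1 : ∀ js : Fin m → Fin n,
            w js * B js = lpNF (s (Fin.last m)) (fun j => h (Fin.snoc js j)) := by
          intro js
          rw [hB_def, ← lpNF_const_mul (hwnn js) (fun j => hf _) hsm]
          apply lpNF_congr
          intro j
          rw [hh_def]
          simp only [Fin.init_snoc]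
        calc mixedNormE n m (fun _ => s (Fin.last m)) (fun js => w js * B js)
            = mixedNormE n m (fun _ => s (Fin.last m))
                (fun js => lpNF (s (Fin.last m)) (fun j => h (Fin.snoc js j))) :=
              mixedNormE_congr n m (fun _ => rfl) e1
          _ = mixedNormE n (m+1) (fun _ => s (Fin.last m)) h :=
              (mixedNormE_snoc n m (fun _ => s (Fin.last m)) h).symm
          _ = lpNF (s (Fin.last m)) h := mixedNormE_flat n hn (m+1) (s (Fin.last m)) hsm h hhnn
      set g : Fin n → ℝ := fun j => lpNF base (fun js => h (Fin.snoc js j)) with hg_def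
      have hgnn : ∀ j, 0 ≤ g j := fun j => lpNF_nonneg (fun js => hhnn _)
      have hC : lpNF (s (Fin.last m)) h ≤ lpNF (s (Fin.last m)) g := by
        rw [← lpNF_reindex (snocEquiv n m) h,
          lpNF_prod hsm (fun p => h ((snocEquiv n m) p)) (fun p => hhnn _)]
        refine lpNF_mono (fun j => lpNF_nonneg fun js => hhnn _) (fun j => ?_)
        exact lpNF_anti hbase hbsm (fun js => hhnn _)
      obtain ⟨lamm, hlammnn, hlamm1, hlamm2, hD⟩ :=
        lpNF_dual hb1 hsm hcm hrel_last g hgnn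
      refine ⟨Fin.lastCases lamm lam', ?_, ?_, ?_⟩
      · intro k
        refine Fin.lastCases ?_ ?_ k
        · simpa [Fin.lastCases_last] using hlammnn
        · intro i
          simpa [Fin.lastCases_castSucc] using hlam'nn i
      · intro k
        refine Fin.lastCases ?_ ?_ k
        · constructor
          · intro hc0
            simpa [Fin.lastCases_last] using hlamm1 hc0
          · intro hc0
            simpa [Fin.lastCases_last] using hlamm2 hc0
        · intro i
          constructor
          · intro hc0
            simpa [Fin.lastCases_castSucc] using (hlam'cond i).1 hc0
          · intro hc0
            simpa [Fin.lastCases_castSucc] using (hlam'cond i).2 hc0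
      · -- the chain of inequalities
        have hE : (∑ j, (lamm j * g j) ^ b) ^ (1/b)
            = mixedNormE n (m+1) (fun _ => base)
                (fun js => (∏ k, Fin.lastCases lamm lam' k (js k)) * f js) := by
          have hfin : ∀ js : Fin (m+1) → Fin n,
              0 ≤ (∏ k, Fin.lastCases lamm lam' k (js k)) * f js := by
            intro js
            refine mul_nonneg (Finset.prod_nonneg fun k _ => ?_) (hf js)
            refine Fin.lastCases ?_ ?_ k
            · simpa [Fin.lastCases_last] using hlammnn (js _)
            · intro i
              simpa [Fin.lastCases_castSucc] using hlam'nn i (js _)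
          rw [mixedNormE_flat n hn (m+1) base hbase _ hfin]
          calc (∑ j, (lamm j * g j) ^ b) ^ (1/b)
              = lpNF base (fun j => lamm j * g j) := by rw [lpNF, if_neg hbtop]
            _ = lpNF base (fun j => lpNF base (fun js => lamm j * h (Fin.snoc js j))) := by
                apply lpNF_congr
                intro j
                rw [hg_def, ← lpNF_const_mul (hlammnn j) (fun js => hhnn _) hbase]
            _ = lpNF base (fun p : (Fin m → Fin n) × Fin n
                  => lamm p.2 * h (Fin.snoc p.1 p.2)) :=
                (lpNF_prod hbase (fun p : (Fin m → Fin n) × Fin n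
                  => lamm p.2 * h (Fin.snoc p.1 p.2))
                  (fun p => mul_nonneg (hlammnn _) (hhnn _))).symm
            _ = lpNF base (fun js : Fin (m+1) → Fin n => lamm (js (Fin.last m)) * h js) := by
                rw [← lpNF_reindex (snocEquiv n m)
                  (fun js : Fin (m+1) → Fin n => lamm (js (Fin.last m)) * h js)]
                apply lpNF_congr
                intro p
                simp only [snocEquiv, Equiv.coe_fn_mk, Fin.snoc_last]
            _ = lpNF base
                  (fun js => (∏ k, Fin.lastCases lamm lam' k (js k)) * f js) := by
                apply lpNF_congr
                intro js
                have hprod : (∏ k, Fin.lastCases lamm lam' k (js k) : ℝ)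
                    = (∏ k : Fin m, lam' k (js k.castSucc)) * lamm (js (Fin.last m)) := by
                  simp [Fin.prod_univ_castSucc]
                rw [hprod, hh_def, hw_def]
                have hinit : ∀ k : Fin m, Fin.init js k = js k.castSucc := fun k => rfl
                simp only [hinit]
                ring
        calc mixedNormE n (m+1) s f
            = mixedNormE n m (fun k => s k.castSucc) B := mixedNormE_snoc n m s f
          _ ≤ mixedNormE n m (fun _ => s (Fin.last m)) (fun js => w js * B js) := hIH
          _ = lpNF (s (Fin.last m)) h := hB2
          _ ≤ lpNF (s (Fin.last m)) g := hC
          _ ≤ (∑ j, (lamm j * g j) ^ b) ^ (1/b) := hD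
          _ = mixedNormE n (m+1) (fun _ => base)
                (fun js => (∏ k, Fin.lastCases lamm lam' k (js k)) * f js) := hE

variable {𝕂 : Type*} [RCLike 𝕂] {X : Type*} [NormedAddCommGroup X] [NormedSpace 𝕂 X]

lemma weakLpNormE_eq (p : ℝ≥0∞) {n : ℕ} (x : Fin n → X) :
    weakLpNormE 𝕂 p x = ⨆ φ : {φ : X →L[𝕂] 𝕂 // ‖φ‖ ≤ 1},
      lpNF p (fun j => ‖(φ : X →L[𝕂] 𝕂) (x j)‖) := rfl

lemma weakLpNormE_nonneg (p : ℝ≥0∞) {n : ℕ} (x : Fin n → X) :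
    0 ≤ weakLpNormE 𝕂 p x := by
  rw [weakLpNormE_eq]
  exact Real.iSup_nonneg fun φ => lpNF_nonneg fun j => norm_nonneg _

lemma weakLpNormE_bddAbove (p : ℝ≥0∞) {n : ℕ} (x : Fin n → X) :
    BddAbove (Set.range fun φ : {φ : X →L[𝕂] 𝕂 // ‖φ‖ ≤ 1} =>
      lpNF p (fun j => ‖(φ : X →L[𝕂] 𝕂) (x j)‖)) := by
  refine ⟨lpNF p (fun j => ‖x j‖), ?_⟩
  rintro y ⟨φ, rfl⟩
  refine lpNF_mono (fun j => norm_nonneg _) (fun j => ?_)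
  calc ‖(φ : X →L[𝕂] 𝕂) (x j)‖ ≤ ‖(φ : X →L[𝕂] 𝕂)‖ * ‖x j‖ :=
        (φ : X →L[𝕂] 𝕂).le_opNorm (x j)
    _ ≤ 1 * ‖x j‖ := mul_le_mul_of_nonneg_right φ.2 (norm_nonneg _)
    _ = ‖x j‖ := one_mul _

/-- Hölder transfer for weak norms under scalar weights. -/
lemma weakLpNormE_holder {n : ℕ} (hn : n ≠ 0) (p q : ℝ≥0∞) (hp : 1 ≤ p) (hq : 1 ≤ q)
    {c : ℝ} (hc : 0 ≤ c) (hrel : (p⁻¹).toReal = c + (q⁻¹).toReal)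
    (lam : Fin n → ℝ) (hlam : ∀ j, 0 ≤ lam j)
    (hl1 : c = 0 → ∀ j, lam j ≤ 1) (hl2 : c ≠ 0 → ∑ j, lam j ^ (1 / c) ≤ 1)
    (x : Fin n → X) :
    weakLpNormE 𝕂 p (fun j => ((lam j : ℝ) : 𝕂) • x j) ≤ weakLpNormE 𝕂 q x := by
  haveI : Nonempty (Fin n) := ⟨⟨0, Nat.pos_of_ne_zero hn⟩⟩
  rw [weakLpNormE_eq, weakLpNormE_eq]
  refine Real.iSup_le (fun φ => ?_)
    (Real.iSup_nonneg fun φ => lpNF_nonneg fun j => norm_nonneg _)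
  have hval : (fun j => ‖(φ : X →L[𝕂] 𝕂) (((lam j : ℝ) : 𝕂) • x j)‖)
      = fun j => lam j * ‖(φ : X →L[𝕂] 𝕂) (x j)‖ := by
    funext j
    rw [map_smul, smul_eq_mul, norm_mul, RCLike.norm_ofReal, abs_of_nonneg (hlam j)]
  calc lpNF p (fun j => ‖(φ : X →L[𝕂] 𝕂) (((lam j : ℝ) : 𝕂) • x j)‖)
      = lpNF p (fun j => lam j * ‖(φ : X →L[𝕂] 𝕂) (x j)‖) := by rw [hval]
    _ ≤ lpNF q (fun j => ‖(φ : X →L[𝕂] 𝕂) (x j)‖) :=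
        lpNF_holder p q hp hq hc hrel lam _ hlam (fun j => norm_nonneg _) hl1 hl2
    _ ≤ ⨆ φ' : {φ : X →L[𝕂] 𝕂 // ‖φ‖ ≤ 1},
          lpNF q (fun j => ‖(φ' : X →L[𝕂] 𝕂) (x j)‖) :=
        le_ciSup (weakLpNormE_bddAbove q x) φ

end Aux

/-- **Extended inclusion theorem (critical case).**
Let `r ∈ [1,∞)`, `𝐩, 𝐪, 𝐬 ∈ [1,∞]^m` with `q_k ≥ p_k` for `k = 2,…,m`, `q_1 > p_1`,
`1/r − |1/𝐩| + |1/𝐪| ≥ 0`, and `1/s_k − |1/𝐪|_{≥k} = 1/r − |1/𝐩|_{≥k}` for all `k`.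
If `T` is multiple `(r; 𝐩)`-summing with constant `C`, then `T` is multiple
`(𝐬; 𝐪)`-summing with the same constant `C`. -/
theorem inclusion_theorem_critical (𝕂 : Type*) [RCLike 𝕂] (m : ℕ) (hm : 0 < m)
    (r : ℝ≥0∞) (hr : 1 ≤ r) (hr' : r ≠ ⊤)
    (p q s : Fin m → ℝ≥0∞) (hp : ∀ k, 1 ≤ p k) (hq : ∀ k, 1 ≤ q k) (hs : ∀ k, 1 ≤ s k)
    (hpq : ∀ k : Fin m, (k : ℕ) ≠ 0 → p k ≤ q k)
    (hpq1 : p ⟨0, hm⟩ < q ⟨0, hm⟩)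
    (hsum : 0 ≤ (1 / r).toReal - (∑ k : Fin m, (1 / p k).toReal)
        + ∑ k : Fin m, (1 / q k).toReal)
    (hseq : ∀ k : Fin m,
      (1 / s k).toReal - ∑ i ∈ Finset.univ.filter (fun i : Fin m => k ≤ i), (1 / q i).toReal
        = (1 / r).toReal
          - ∑ i ∈ Finset.univ.filter (fun i : Fin m => k ≤ i), (1 / p i).toReal)
    (X : Fin m → Type*) [∀ k, NormedAddCommGroup (X k)] [∀ k, NormedSpace 𝕂 (X k)]
    [∀ k, CompleteSpace (X k)]
    (Y : Type*) [NormedAddCommGroup Y] [NormedSpace 𝕂 Y] [CompleteSpace Y]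
    (T : ContinuousMultilinearMap 𝕂 X Y) (C : ℝ) (hC : 0 < C)
    (hT : IsMultipleSumming 𝕂 T (fun _ => r) p C) :
    IsMultipleSumming 𝕂 T s q C := by
  intro n x
  by_cases hn : n = 0
  · -- trivial case `n = 0`
    subst hn
    obtain ⟨m', rfl⟩ : ∃ m', m = m' + 1 := ⟨m - 1, (Nat.succ_pred_eq_of_pos hm).symm⟩
    have hL : mixedNormE 0 (m'+1) s (fun js => ‖T fun k => x k (js k)‖) = 0 := by
      rw [mixedNormE_succ]
      exact lpNF_empty (hs 0) _
    rw [hL]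
    exact mul_nonneg hC.le (Finset.prod_nonneg fun k _ => weakLpNormE_nonneg _ _)
  · haveI : Nonempty (Fin n) := ⟨⟨0, Nat.pos_of_ne_zero hn⟩⟩
    have hpq' : ∀ k, p k ≤ q k := by
      intro k
      by_cases h : (k : ℕ) = 0
      · have hk : k = ⟨0, hm⟩ := by
          apply Fin.ext
          simpa using h
        rw [hk]
        exact le_of_lt hpq1
      · exact hpq k h
    have hp_inv_ne : ∀ k, (p k)⁻¹ ≠ ⊤ := fun k =>
      ENNReal.inv_ne_top.mpr (zero_lt_one.trans_le (hp k)).ne'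
    have hc_nonneg : ∀ k : Fin m, 0 ≤ (1 / p k).toReal - (1 / q k).toReal := by
      intro k
      have h1 : (q k)⁻¹ ≤ (p k)⁻¹ := ENNReal.inv_le_inv.mpr (hpq' k)
      have h2 := ENNReal.toReal_mono (hp_inv_ne k) h1
      simp only [one_div]
      linarith
    have hrelKEY : ∀ k : Fin m, ((s k)⁻¹).toReal
        = (r⁻¹).toReal - ∑ i ∈ Finset.univ.filter (fun i : Fin m => k ≤ i),
            ((1 / p i).toReal - (1 / q i).toReal) := by
      intro k
      have h := hseq k
      rw [Finset.sum_sub_distrib]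
      rw [show (s k)⁻¹ = 1 / s k from (one_div _).symm,
        show r⁻¹ = 1 / r from (one_div _).symm]
      linarith
    obtain ⟨lam, hlamnn, hlamcond, hkey⟩ := key_weights n hn m r hr s
      (fun k => (1 / p k).toReal - (1 / q k).toReal) hs hc_nonneg hrelKEY
      (fun js => ‖T fun k => x k (js k)‖) (fun js => norm_nonneg _)
    have hTnorm : ∀ js : Fin m → Fin n,
        (∏ k, lam k (js k)) * ‖T fun k => x k (js k)‖
          = ‖T fun k => ((lam k (js k) : ℝ) : 𝕂) • x k (js k)‖ := by
      intro js
      rw [T.map_smul_univ (fun k => ((lam k (js k) : ℝ) : 𝕂)) (fun k => x k (js k)),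
        norm_smul]
      congr 1
      have hcast : (∏ k, ((lam k (js k) : ℝ) : 𝕂)) = ((∏ k, lam k (js k) : ℝ) : 𝕂) := by
        norm_cast
      rw [hcast, RCLike.norm_ofReal,
        abs_of_nonneg (Finset.prod_nonneg fun k _ => hlamnn k _)]
    calc mixedNormE n m s (fun js => ‖T fun k => x k (js k)‖)
        ≤ mixedNormE n m (fun _ => r)
            (fun js => (∏ k, lam k (js k)) * ‖T fun k => x k (js k)‖) := hkey
      _ = mixedNormE n m (fun _ => r)
            (fun js => ‖T fun k => ((lam k (js k) : ℝ) : 𝕂) • x k (js k)‖) :=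
          mixedNormE_congr n m (fun _ => rfl) hTnorm
      _ ≤ C * ∏ k, weakLpNormE 𝕂 (p k) (fun j => ((lam k j : ℝ) : 𝕂) • x k j) :=
          hT n (fun k j => ((lam k j : ℝ) : 𝕂) • x k j)
      _ ≤ C * ∏ k, weakLpNormE 𝕂 (q k) (x k) := by
          refine mul_le_mul_of_nonneg_left
            (Finset.prod_le_prod (fun k _ => weakLpNormE_nonneg _ _) (fun k _ => ?_)) hC.le
          refine weakLpNormE_holder hn (p k) (q k) (hp k) (hq k) (hc_nonneg k) ?_
            (lam k) (hlamnn k) (hlamcond k).1 (hlamcond k).2 (x k)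
          rw [show (p k)⁻¹ = 1 / p k from (one_div _).symm,
            show (q k)⁻¹ = 1 / q k from (one_div _).symm]
          ring
end

section
/- Let m be a positive integer, r ≥ 1, and let 𝐩, 𝐪, 𝐬 ∈ [1, ∞]^m satisfy: q_k ≥ p_k for all k = 1, …, m and 1/r − |1/𝐩| + |1/𝐪| > 0, where the exponents 𝐬 are determined by 1/s_k − |1/𝐪|_{≥k} = 1/r − |1/𝐩|_{≥k} for each k = 1, …, m. Then for all Banach spaces X_1, …, X_m and Y over 𝕂 and every continuous m-linear operator T : X_1 × ⋯ × X_m → Y, if T is multiple (r; 𝐩)-summing with constant C, then T is multiple (𝐬; 𝐪)-summing with the same constant C (i.e. the inclusion operator between these classes has norm 1); here, in contrast with the original Albuquerque–Rezende inclusion theorem, entries of 𝐩, 𝐪, 𝐬 are allowed to equal ∞. -/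
open scoped ENNReal

open scoped NNReal

namespace IncAux

lemma mixedNormE_zero (n : ℕ) (r : Fin 0 → ℝ≥0∞) (f : (Fin 0 → Fin n) → ℝ) :
    mixedNormE n 0 r f = f Fin.elim0 := rfl

lemma mixedNormE_succ (n m : ℕ) (r : Fin (m+1) → ℝ≥0∞) (f : (Fin (m+1) → Fin n) → ℝ) :
    mixedNormE n (m+1) r f =
      if r 0 = ⊤ then
        ⨆ j : Fin n, mixedNormE n m (fun i => r i.succ) (fun js => f (Fin.cons j js))
      else
        (∑ j : Fin n,
          (mixedNormE n m (fun i => r i.succ) (fun js => f (Fin.cons j js))) ^ (r 0).toReal)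
          ^ (1 / (r 0).toReal) := rfl

lemma rpow_cancel {x : ℝ} (hx : 0 ≤ x) {E : ℝ} (hE : E ≠ 0) : (x ^ E) ^ (1/E) = x := by
  rw [one_div]; exact Real.rpow_rpow_inv hx hE

lemma rpow_cancel' {x : ℝ} (hx : 0 ≤ x) {E : ℝ} (hE : E ≠ 0) : (x ^ (1/E)) ^ E = x := by
  rw [one_div]; exact Real.rpow_inv_rpow hx hE

lemma mixed_nonneg (n : ℕ) : ∀ (m : ℕ) (r : Fin m → ℝ≥0∞) (f : (Fin m → Fin n) → ℝ),
    (∀ j, 0 ≤ f j) → 0 ≤ mixedNormE n m r f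
  | 0, r, f, hf => hf _
  | (m+1), r, f, hf => by
    rw [mixedNormE_succ]
    split
    · exact Real.iSup_nonneg fun j => mixed_nonneg n m _ _ fun js => hf _
    · exact Real.rpow_nonneg (Finset.sum_nonneg fun j _ => Real.rpow_nonneg
        (mixed_nonneg n m _ _ fun js => hf _) _) _

lemma mixed_smul (n : ℕ) : ∀ (m : ℕ) (r : Fin m → ℝ≥0∞) (f : (Fin m → Fin n) → ℝ)
    (k : ℝ), (∀ j, 0 ≤ f j) → 0 ≤ k → (∀ i, r i ≠ ⊤ ∧ (r i).toReal ≠ 0) →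
    mixedNormE n m r (fun j => k * f j) = k * mixedNormE n m r f
  | 0, r, f, k, hf, hk, hr => rfl
  | (m+1), r, f, k, hf, hk, hr => by
    rw [mixedNormE_succ, mixedNormE_succ, if_neg (hr 0).1, if_neg (hr 0).1]
    have hE := (hr 0).2
    have hrec : ∀ j : Fin n,
        mixedNormE n m (fun i => r i.succ) (fun js => k * f (Fin.cons j js))
          = k * mixedNormE n m (fun i => r i.succ) (fun js => f (Fin.cons j js)) := fun j =>
      mixed_smul n m _ _ k (fun js => hf _) hk (fun i => hr i.succ)
    have hnn : ∀ j : Fin n, 0 ≤ mixedNormE n m (fun i => r i.succ)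
        (fun js => f (Fin.cons j js)) := fun j => mixed_nonneg n m _ _ fun js => hf _
    calc (∑ j : Fin n, (mixedNormE n m (fun i => r i.succ)
            (fun js => (fun j' => k * f j') (Fin.cons j js))) ^ (r 0).toReal) ^ (1 / (r 0).toReal)
        = (∑ j : Fin n, (k * mixedNormE n m (fun i => r i.succ)
            (fun js => f (Fin.cons j js))) ^ (r 0).toReal) ^ (1 / (r 0).toReal) := by
          simp only [hrec]
      _ = (k ^ (r 0).toReal * ∑ j : Fin n, (mixedNormE n m (fun i => r i.succ)
            (fun js => f (Fin.cons j js))) ^ (r 0).toReal) ^ (1 / (r 0).toReal) := by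
          rw [Finset.mul_sum]
          congr 1
          exact Finset.sum_congr rfl fun j _ => Real.mul_rpow hk (hnn j)
      _ = k * (∑ j : Fin n, (mixedNormE n m (fun i => r i.succ)
            (fun js => f (Fin.cons j js))) ^ (r 0).toReal) ^ (1 / (r 0).toReal) := by
          rw [Real.mul_rpow (Real.rpow_nonneg hk _)
            (Finset.sum_nonneg fun j _ => Real.rpow_nonneg (hnn j) _), rpow_cancel hk hE]

lemma mixed_cast (n : ℕ) {m₁ m₂ : ℕ} (h : m₁ = m₂) (r : Fin m₂ → ℝ≥0∞)
    (f : (Fin m₂ → Fin n) → ℝ) :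
    mixedNormE n m₂ r f = mixedNormE n m₁ (fun i => r (Fin.cast h i))
      (fun j => f (fun i => j (Fin.cast h.symm i))) := by
  subst h; rfl

/-- splice a prefix of length `c` with a tail. -/
def splice {n m : ℕ} (c : ℕ) (v : Fin c → Fin n) (w : Fin (m - c) → Fin n) : Fin m → Fin n :=
  fun i => if h : (i : ℕ) < c then v ⟨i, h⟩ else w ⟨(i : ℕ) - c, by have := i.isLt; omega⟩

/-- snoc equivalence for tuples of `Fin n`. -/
def snocEquiv (n c : ℕ) : ((Fin c → Fin n) × Fin n) ≃ (Fin (c+1) → Fin n) where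
  toFun vj := Fin.snoc vj.1 vj.2
  invFun v' := (fun i => v' i.castSucc, v' (Fin.last c))
  left_inv := fun ⟨v, j⟩ => by
    rw [Prod.mk.injEq]
    exact ⟨funext fun i => by simp, by simp⟩
  right_inv := fun v' => Fin.snoc_init_self v'

lemma flat (n : ℕ) {ER : ℝ≥0∞} (hER : ER ≠ ⊤) (hE0 : ER.toReal ≠ 0) :
    ∀ (c : ℕ) {m : ℕ} (hc : c ≤ m) (r : Fin m → ℝ≥0∞)
      (hr : ∀ i : Fin m, (i : ℕ) < c → r i = ER)
      (f : (Fin m → Fin n) → ℝ) (hf : ∀ j, 0 ≤ f j),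
    mixedNormE n m r f
      = (∑ v : Fin c → Fin n,
          (mixedNormE n (m - c) (fun i => r ⟨c + (i : ℕ), by have := i.isLt; omega⟩)
            (fun w => f (splice c v w))) ^ ER.toReal) ^ (1 / ER.toReal) := by
  intro c
  induction c with
  | zero =>
    intro m hc r hr f hf
    rw [Fintype.sum_unique]
    rw [rpow_cancel (mixed_nonneg n _ _ _ fun w => hf _) hE0]
    have e1 : (fun i : Fin (m - 0) => r ⟨0 + (i : ℕ), by have := i.isLt; omega⟩)
        = (fun i : Fin m => r i) := funext fun i => congrArg r (Fin.ext (by simp))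
    have e2 : (fun w : Fin (m - 0) → Fin n => f (splice 0 default w))
        = (fun w : Fin m → Fin n => f w) :=
      funext fun w => congrArg f (funext fun i => dif_neg (Nat.not_lt_zero _))
    exact (congrArg₂ (mixedNormE n m) e1 e2).symm
  | succ c ih =>
    intro m hc r hr f hf
    have hc' : c ≤ m := by omega
    rw [ih hc' r (fun i hi => hr i (by omega)) f hf]
    set k := m - (c+1) with hkdef
    have hk : m - c = k + 1 := by omega
    have hsums : (∑ v : Fin c → Fin n,
          (mixedNormE n (m - c) (fun i => r ⟨c + (i : ℕ), by have := i.isLt; omega⟩)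
            (fun w => f (splice c v w))) ^ ER.toReal)
        = ∑ v' : Fin (c+1) → Fin n,
          (mixedNormE n (m - (c+1)) (fun i => r ⟨(c+1) + (i : ℕ), by have := i.isLt; omega⟩)
            (fun w => f (splice (c+1) v' w))) ^ ER.toReal := by
      have hIv : ∀ v : Fin c → Fin n,
          (mixedNormE n (m - c) (fun i => r ⟨c + (i : ℕ), by have := i.isLt; omega⟩)
            (fun w => f (splice c v w))) ^ ER.toReal
          = ∑ j : Fin n,
            (mixedNormE n k
              (fun i => r ⟨c + ((Fin.cast hk.symm (Fin.succ i) : Fin (m - c)) : ℕ),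
                 by have := (Fin.cast hk.symm (Fin.succ i)).isLt; omega⟩)
              (fun js => f (splice c v
                (fun i => (Fin.cons j js : Fin (k+1) → Fin n) (Fin.cast hk i))))) ^ ER.toReal := by
        intro v
        rw [mixed_cast n hk.symm]
        rw [mixedNormE_succ]
        have h0 : r ⟨c + ((Fin.cast hk.symm (0 : Fin (k+1)) : Fin (m - c)) : ℕ),
            by have := (Fin.cast hk.symm (0 : Fin (k+1))).isLt; omega⟩ = ER := by
          apply hr
          simp
        rw [if_neg (by rw [h0]; exact hER)]
        rw [h0]
        rw [rpow_cancel' (Finset.sum_nonneg fun j _ => Real.rpow_nonneg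
          (mixed_nonneg n _ _ _ fun js => hf _) _) hE0]
      calc (∑ v : Fin c → Fin n, _) = ∑ v : Fin c → Fin n, ∑ j : Fin n, _ :=
            Finset.sum_congr rfl fun v _ => hIv v
        _ = _ := by
          rw [← Equiv.sum_comp (snocEquiv n c), Fintype.sum_prod_type]
          refine Finset.sum_congr rfl fun v _ => Finset.sum_congr rfl fun j _ => ?_
          congr 1
          congr 1
          · funext i
            refine congrArg r (Fin.ext ?_)
            simp only [Fin.coe_cast, Fin.val_succ]
            omega
          · funext js
            refine congrArg f (funext fun i2 => ?_)
            show splice c v _ i2 = splice (c+1) (Fin.snoc v j) js i2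
            unfold splice
            by_cases h1 : (i2 : ℕ) < c
            · rw [dif_pos h1, dif_pos (by omega : (i2:ℕ) < c + 1)]
              have : (⟨(i2:ℕ), by omega⟩ : Fin (c+1)) = Fin.castSucc ⟨(i2:ℕ), h1⟩ :=
                Fin.ext rfl
              rw [this, Fin.snoc_castSucc]
            · rw [dif_neg h1]
              by_cases h2 : (i2 : ℕ) < c + 1
              · rw [dif_pos h2]
                beta_reduce
                have hcast : (Fin.cast hk ⟨(i2:ℕ) - c, by have := i2.isLt; omega⟩ :
                    Fin (k+1)) = 0 := by
                  apply Fin.ext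
                  simp only [Fin.coe_cast, Fin.val_zero]
                  omega
                rw [hcast, Fin.cons_zero]
                have : (⟨(i2:ℕ), h2⟩ : Fin (c+1)) = Fin.last c := by
                  apply Fin.ext; simp only [Fin.val_last]; omega
                rw [this, Fin.snoc_last]
              · rw [dif_neg h2]
                beta_reduce
                have hcast : (Fin.cast hk ⟨(i2:ℕ) - c, by have := i2.isLt; omega⟩ :
                    Fin (k+1)) = Fin.succ ⟨(i2:ℕ) - (c+1), by have := i2.isLt; omega⟩ := by
                  apply Fin.ext
                  simp only [Fin.coe_cast, Fin.val_succ]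
                  omega
                rw [hcast, Fin.cons_succ]
    rw [hsums]

lemma real_add_rpow {a b p : ℝ} (ha : 0 ≤ a) (hb : 0 ≤ b) (hp : 1 ≤ p) :
    a ^ p + b ^ p ≤ (a + b) ^ p := by
  lift a to ℝ≥0 using ha
  lift b to ℝ≥0 using hb
  have := NNReal.add_rpow_le_rpow_add a b hp
  have h2 : ((a ^ p + b ^ p : ℝ≥0) : ℝ) ≤ (((a + b) ^ p : ℝ≥0) : ℝ) := by exact_mod_cast this
  push_cast at h2
  exact h2

lemma sum_rpow_le_rpow_sum {ι : Type*} (s : Finset ι) (f : ι → ℝ) (hf : ∀ i, 0 ≤ f i)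
    {p : ℝ} (hp : 1 ≤ p) : ∑ i ∈ s, f i ^ p ≤ (∑ i ∈ s, f i) ^ p := by
  induction s using Finset.cons_induction with
  | empty => simp [Real.zero_rpow (by linarith : p ≠ 0)]
  | cons a s ha ih =>
    rw [Finset.sum_cons, Finset.sum_cons]
    calc f a ^ p + ∑ i ∈ s, f i ^ p ≤ f a ^ p + (∑ i ∈ s, f i) ^ p := by linarith
    _ ≤ (f a + ∑ i ∈ s, f i) ^ p :=
        real_add_rpow (hf a) (Finset.sum_nonneg fun i _ => hf i) hp

lemma key_ineq (n c : ℕ) (B : (Fin (c+1) → Fin n) → ℝ) (hB : ∀ v, 0 ≤ B v)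
    {ρ ρ' t : ℝ} (hρ : 0 < ρ) (hρ' : 0 < ρ') (ht : 0 < t)
    (hrel : 1/ρ = 1/ρ' + 1/t) :
    ∃ a : Fin n → ℝ, (∀ j, 0 ≤ a j) ∧ (∑ j : Fin n, a j ^ t) ≤ 1 ∧
      (∑ v : Fin (c+1) → Fin n, B v ^ ρ') ^ (1/ρ')
        ≤ (∑ v : Fin (c+1) → Fin n, (a (v (Fin.last c)) * B v) ^ ρ) ^ (1/ρ) := by
  classical
  set e := Equiv.funSplitAt (Fin.last c) (Fin n) with he
  have hsplit : ∀ (G : (Fin (c+1) → Fin n) → ℝ),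
      ∑ v, G v = ∑ u : Fin n, ∑ w, G (e.symm (u, w)) := by
    intro G
    rw [← Equiv.sum_comp e.symm, Fintype.sum_prod_type]
  have hat : ∀ (u : Fin n) (w : {j : Fin (c+1) // j ≠ Fin.last c} → Fin n),
      (e.symm (u, w)) (Fin.last c) = u := by
    intro u w
    simp [he, Equiv.funSplitAt, Equiv.piSplitAt]
  set S : Fin n → ℝ := fun u => ∑ w, B (e.symm (u, w)) ^ ρ with hSdef
  have hS : ∀ u, 0 ≤ S u := fun u => Finset.sum_nonneg fun w _ => Real.rpow_nonneg (hB _) _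
  set h : Fin n → ℝ := fun u => S u ^ (1/ρ) with hhdef
  have hh : ∀ u, 0 ≤ h u := fun u => Real.rpow_nonneg (hS u) _
  have hhρ : ∀ u, h u ^ ρ = S u := fun u => rpow_cancel' (hS u) hρ.ne'
  set H : ℝ := ∑ u, h u ^ ρ' with hHdef
  have hHnn : 0 ≤ H := Finset.sum_nonneg fun u _ => Real.rpow_nonneg (hh u) _
  have hrel2 : ρ' * t = ρ * t + ρ * ρ' := by
    have h1 := hrel
    field_simp at h1
    linarith
  have hρρ' : ρ ≤ ρ' := by nlinarith [mul_pos hρ hρ']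
  have hLH : (∑ v : Fin (c+1) → Fin n, B v ^ ρ') ≤ H := by
    rw [hsplit (fun v => B v ^ ρ')]
    refine Finset.sum_le_sum fun u _ => ?_
    have h1 : ∀ w, B (e.symm (u, w)) ^ ρ' = (B (e.symm (u, w)) ^ ρ) ^ (ρ'/ρ) := by
      intro w
      rw [← Real.rpow_mul (hB _)]
      congr 1
      field_simp
    have h2 : (∑ w, B (e.symm (u, w)) ^ ρ') ≤ S u ^ (ρ'/ρ) := by
      calc (∑ w, B (e.symm (u, w)) ^ ρ')
          = ∑ w, (B (e.symm (u, w)) ^ ρ) ^ (ρ'/ρ) := Finset.sum_congr rfl fun w _ => h1 w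
        _ ≤ S u ^ (ρ'/ρ) := sum_rpow_le_rpow_sum _ _
            (fun w => Real.rpow_nonneg (hB _) _) ((one_le_div hρ).mpr hρρ')
    have h3 : S u ^ (ρ'/ρ) = h u ^ ρ' := by
      rw [hhdef]
      rw [← Real.rpow_mul (hS u)]
      congr 1
      field_simp
    rw [← h3]
    exact h2
  by_cases hH : H = 0
  · -- degenerate: all B vanish
    have hBz : ∀ v, B v = 0 := by
      intro v
      have h1 : ∀ u, h u ^ ρ' = 0 := by
        intro u
        have := (Finset.sum_eq_zero_iff_of_nonneg
          (fun u _ => Real.rpow_nonneg (hh u) _)).mp (hHdef ▸ hH)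
        exact this u (Finset.mem_univ u)
      have h2 : ∀ u, S u = 0 := by
        intro u
        have hu : h u = 0 := by
          by_contra hne
          have : 0 < h u := lt_of_le_of_ne (hh u) (Ne.symm hne)
          exact absurd (h1 u) (Real.rpow_pos_of_pos this ρ').ne'
        rw [← hhρ u, hu, Real.zero_rpow hρ.ne']
      have h3 : ∀ u w, B (e.symm (u, w)) = 0 := by
        intro u w
        have := (Finset.sum_eq_zero_iff_of_nonneg
          (fun w _ => Real.rpow_nonneg (hB _) _)).mp (h2 u) w (Finset.mem_univ w)
        by_contra hne
        have hpos : 0 < B (e.symm (u, w)) := lt_of_le_of_ne (hB _) (Ne.symm hne)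
        exact absurd this (Real.rpow_pos_of_pos hpos ρ).ne'
      have := h3 (e v).1 (e v).2
      rwa [Prod.mk.eta, e.symm_apply_apply] at this
    refine ⟨fun _ => 0, fun j => le_rfl, ?_, ?_⟩
    · simp [Real.zero_rpow ht.ne']
    · have hz1 : (∑ v : Fin (c+1) → Fin n, B v ^ ρ') = 0 :=
        Finset.sum_eq_zero fun v _ => by rw [hBz v, Real.zero_rpow hρ'.ne']
      have hz2 : (∑ v : Fin (c+1) → Fin n, ((0:ℝ) * B v) ^ ρ) = 0 :=
        Finset.sum_eq_zero fun v _ => by rw [zero_mul, Real.zero_rpow hρ.ne']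
      rw [hz1, hz2, Real.zero_rpow (by positivity : (1:ℝ)/ρ' ≠ 0),
        Real.zero_rpow (by positivity : (1:ℝ)/ρ ≠ 0)]
  · have hHpos : 0 < H := lt_of_le_of_ne hHnn (Ne.symm hH)
    refine ⟨fun u => (h u ^ ρ' / H) ^ (1/t), fun u => Real.rpow_nonneg
      (div_nonneg (Real.rpow_nonneg (hh u) _) hHnn) _, ?_, ?_⟩
    · have : ∀ u : Fin n, ((h u ^ ρ' / H) ^ (1/t)) ^ t = h u ^ ρ' / H := fun u =>
        rpow_cancel' (div_nonneg (Real.rpow_nonneg (hh u) _) hHnn) ht.ne'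
      calc (∑ u : Fin n, ((h u ^ ρ' / H) ^ (1/t)) ^ t) = ∑ u, h u ^ ρ' / H :=
            Finset.sum_congr rfl fun u _ => this u
        _ = H / H := by rw [← Finset.sum_div]
        _ ≤ 1 := by rw [div_self hH]
    · -- main computation
      have hRHS : (∑ v : Fin (c+1) → Fin n,
          ((h (v (Fin.last c)) ^ ρ' / H) ^ (1/t) * B v) ^ ρ) = H ^ ((1/ρ') * ρ) := by
        rw [hsplit]
        have hterm : ∀ u, (∑ w, ((h ((e.symm (u, w)) (Fin.last c)) ^ ρ' / H) ^ (1/t)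
            * B (e.symm (u, w))) ^ ρ) = h u ^ ρ' / H ^ ((1/t) * ρ) := by
          intro u
          have h1 : ∀ w : {j : Fin (c+1) // j ≠ Fin.last c} → Fin n,
              ((h ((e.symm (u, w)) (Fin.last c)) ^ ρ' / H) ^ (1/t) * B (e.symm (u, w))) ^ ρ
              = ((h u ^ ρ' / H) ^ (1/t)) ^ ρ * B (e.symm (u, w)) ^ ρ := by
            intro w
            rw [hat u w]
            exact Real.mul_rpow (Real.rpow_nonneg
              (div_nonneg (Real.rpow_nonneg (hh u) _) hHnn) _) (hB _)
          calc (∑ w, ((h ((e.symm (u, w)) (Fin.last c)) ^ ρ' / H) ^ (1/t)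
                * B (e.symm (u, w))) ^ ρ)
              = ((h u ^ ρ' / H) ^ (1/t)) ^ ρ * S u := by
                rw [Finset.sum_congr rfl fun w _ => h1 w, ← Finset.mul_sum]
            _ = h u ^ ρ' / H ^ ((1/t) * ρ) := by
                rw [← Real.rpow_mul (div_nonneg (Real.rpow_nonneg (hh u) _) hHnn),
                  Real.div_rpow (Real.rpow_nonneg (hh u) _) hHnn,
                  ← Real.rpow_mul (hh u), ← hhρ u]
                rw [div_mul_eq_mul_div]
                congr 1
                rw [← Real.rpow_add' (hh u) (by positivity)]
                congr 1
                have hρ'ne := hρ'.ne'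
                have htne := ht.ne'
                have hρne := hρ.ne'
                field_simp at hrel ⊢
                nlinarith [hrel]
        calc (∑ u : Fin n, ∑ w, ((h ((e.symm (u, w)) (Fin.last c)) ^ ρ' / H) ^ (1/t)
              * B (e.symm (u, w))) ^ ρ)
            = ∑ u, h u ^ ρ' / H ^ ((1/t) * ρ) := Finset.sum_congr rfl fun u _ => hterm u
          _ = H / H ^ ((1/t) * ρ) := by rw [← Finset.sum_div]
          _ = H ^ ((1:ℝ) - (1/t) * ρ) := by
              rw [Real.rpow_sub hHpos, Real.rpow_one]
          _ = H ^ ((1/ρ') * ρ) := by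
              congr 1
              have hρ'ne := hρ'.ne'
              have htne := ht.ne'
              have hρne := hρ.ne'
              field_simp at hrel ⊢
              nlinarith [hrel]
      rw [hRHS]
      have hfin : (H ^ ((1/ρ') * ρ)) ^ (1/ρ) = H ^ (1/ρ') := by
        rw [← Real.rpow_mul hHnn, mul_assoc, mul_one_div, div_self hρ.ne', mul_one]
      rw [hfin]
      exact Real.rpow_le_rpow (Finset.sum_nonneg fun v _ => Real.rpow_nonneg (hB v) _)
        hLH (by positivity)


section WK
variable {𝕂 : Type*} [RCLike 𝕂] {X : Type*} [NormedAddCommGroup X] [NormedSpace 𝕂 X] {n : ℕ}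

instance ballNonempty : Nonempty {φ : X →L[𝕂] 𝕂 // ‖φ‖ ≤ 1} :=
  ⟨⟨0, by simp⟩⟩

lemma phi_bound (φ : {φ : X →L[𝕂] 𝕂 // ‖φ‖ ≤ 1}) (y : X) : ‖(φ : X →L[𝕂] 𝕂) y‖ ≤ ‖y‖ := by
  calc ‖(φ : X →L[𝕂] 𝕂) y‖ ≤ ‖(φ : X →L[𝕂] 𝕂)‖ * ‖y‖ := (φ : X →L[𝕂] 𝕂).le_opNorm y
  _ ≤ 1 * ‖y‖ := mul_le_mul_of_nonneg_right φ.2 (norm_nonneg y)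
  _ = ‖y‖ := one_mul _

lemma wk_term_nonneg (p : ℝ≥0∞) (x : Fin n → X) (φ : {φ : X →L[𝕂] 𝕂 // ‖φ‖ ≤ 1}) :
    0 ≤ if p = ⊤ then ⨆ j : Fin n, ‖(φ : X →L[𝕂] 𝕂) (x j)‖
      else (∑ j : Fin n, ‖(φ : X →L[𝕂] 𝕂) (x j)‖ ^ p.toReal) ^ (1 / p.toReal) := by
  split
  · exact Real.iSup_nonneg fun j => norm_nonneg _
  · exact Real.rpow_nonneg (Finset.sum_nonneg fun j _ => Real.rpow_nonneg (norm_nonneg _) _) _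

lemma wk_nonneg (p : ℝ≥0∞) (x : Fin n → X) : 0 ≤ weakLpNormE 𝕂 p x :=
  Real.iSup_nonneg (wk_term_nonneg p x)

lemma wk_bdd (p : ℝ≥0∞) (x : Fin n → X) :
    BddAbove (Set.range fun φ : {φ : X →L[𝕂] 𝕂 // ‖φ‖ ≤ 1} =>
      if p = ⊤ then ⨆ j : Fin n, ‖(φ : X →L[𝕂] 𝕂) (x j)‖
      else (∑ j : Fin n, ‖(φ : X →L[𝕂] 𝕂) (x j)‖ ^ p.toReal) ^ (1 / p.toReal)) := by
  by_cases hp : p = ⊤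
  · refine ⟨∑ j : Fin n, ‖x j‖, ?_⟩
    rintro _ ⟨φ, rfl⟩
    beta_reduce
    rw [if_pos hp]
    refine Real.iSup_le (fun j => ?_) (Finset.sum_nonneg fun j _ => norm_nonneg _)
    exact le_trans (phi_bound φ (x j))
      (Finset.single_le_sum (fun i _ => norm_nonneg (x i)) (Finset.mem_univ j))
  · refine ⟨(∑ j : Fin n, ‖x j‖ ^ p.toReal) ^ (1 / p.toReal), ?_⟩
    rintro _ ⟨φ, rfl⟩
    beta_reduce
    rw [if_neg hp]
    refine Real.rpow_le_rpow (Finset.sum_nonneg fun j _ => Real.rpow_nonneg (norm_nonneg _) _)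
      (Finset.sum_le_sum fun j _ => ?_) (by positivity)
    exact Real.rpow_le_rpow (norm_nonneg _) (phi_bound φ (x j)) ENNReal.toReal_nonneg

lemma wk_le (p : ℝ≥0∞) (x : Fin n → X) (φ : {φ : X →L[𝕂] 𝕂 // ‖φ‖ ≤ 1}) :
    (if p = ⊤ then ⨆ j : Fin n, ‖(φ : X →L[𝕂] 𝕂) (x j)‖
      else (∑ j : Fin n, ‖(φ : X →L[𝕂] 𝕂) (x j)‖ ^ p.toReal) ^ (1 / p.toReal))
      ≤ weakLpNormE 𝕂 p x :=
  le_ciSup (wk_bdd p x) φ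

lemma weak_holder (p q : ℝ≥0∞) (hp1 : 1 ≤ p) (hq1 : 1 ≤ q) (hpT : p ≠ ⊤)
    (t : ℝ) (ht : 0 < t) (hrel : (1/p).toReal = 1/t + (1/q).toReal)
    (a : Fin n → ℝ) (ha : ∀ j, 0 ≤ a j) (hat : ∑ j : Fin n, a j ^ t ≤ 1)
    (x : Fin n → X) :
    weakLpNormE 𝕂 p (fun j => ((a j : ℝ) : 𝕂) • x j) ≤ weakLpNormE 𝕂 q x := by
  have hp0 : p ≠ 0 := by
    intro h; rw [h] at hp1; exact absurd hp1 (by simp)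
  have hP : p.toReal ≠ 0 := by
    intro h
    rcases ENNReal.toReal_eq_zero_iff p |>.mp h with h | h
    · exact hp0 h
    · exact hpT h
  have hPpos : 0 < p.toReal := lt_of_le_of_ne ENNReal.toReal_nonneg (Ne.symm hP)
  have hP1 : 1 ≤ p.toReal := by
    have := ENNReal.toReal_mono hpT hp1
    simpa using this
  have h1p : (1/p).toReal = 1/p.toReal := by
    rw [one_div, one_div, ENNReal.toReal_inv]
  have hφval : ∀ (φ : {φ : X →L[𝕂] 𝕂 // ‖φ‖ ≤ 1}) (j : Fin n),
      ‖(φ : X →L[𝕂] 𝕂) (((a j : ℝ) : 𝕂) • x j)‖ = a j * ‖(φ : X →L[𝕂] 𝕂) (x j)‖ := by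
    intro φ j
    rw [map_smul, norm_smul, RCLike.norm_ofReal, abs_of_nonneg (ha j)]
  apply ciSup_le
  intro φ
  rw [if_neg hpT]
  have hsum : ∀ j ∈ Finset.univ, ‖(φ : X →L[𝕂] 𝕂) (((a j : ℝ) : 𝕂) • x j)‖ ^ p.toReal
      = (a j * ‖(φ : X →L[𝕂] 𝕂) (x j)‖) ^ p.toReal := fun j _ => by rw [hφval φ j]
  rw [Finset.sum_congr rfl hsum]
  by_cases hq : q = ⊤
  · -- q = ∞ : p.toReal = t
    have hPt : p.toReal = t := by
      rw [hq, h1p] at hrel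
      simp only [one_div, ENNReal.inv_top, ENNReal.toReal_zero, add_zero] at hrel
      exact inv_injective hrel
    set Sφ := ⨆ j : Fin n, ‖(φ : X →L[𝕂] 𝕂) (x j)‖ with hSφ
    have hSφnn : 0 ≤ Sφ := Real.iSup_nonneg fun j => norm_nonneg _
    have hbd : ∀ j : Fin n, ‖(φ : X →L[𝕂] 𝕂) (x j)‖ ≤ Sφ := fun j =>
      le_ciSup (f := fun j : Fin n => ‖(φ : X →L[𝕂] 𝕂) (x j)‖)
        (Set.Finite.bddAbove (Set.finite_range _)) j
    have hle : (∑ j : Fin n, (a j * ‖(φ : X →L[𝕂] 𝕂) (x j)‖) ^ p.toReal)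
        ≤ Sφ ^ p.toReal := by
      calc (∑ j : Fin n, (a j * ‖(φ : X →L[𝕂] 𝕂) (x j)‖) ^ p.toReal)
          ≤ ∑ j : Fin n, a j ^ p.toReal * Sφ ^ p.toReal := by
            refine Finset.sum_le_sum fun j _ => ?_
            rw [Real.mul_rpow (ha j) (norm_nonneg _)]
            exact mul_le_mul_of_nonneg_left
              (Real.rpow_le_rpow (norm_nonneg _) (hbd j) ENNReal.toReal_nonneg)
              (Real.rpow_nonneg (ha j) _)
        _ = (∑ j : Fin n, a j ^ p.toReal) * Sφ ^ p.toReal := by rw [Finset.sum_mul]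
        _ ≤ 1 * Sφ ^ p.toReal := by
            refine mul_le_mul_of_nonneg_right ?_ (Real.rpow_nonneg hSφnn _)
            rw [hPt]; exact hat
        _ = Sφ ^ p.toReal := one_mul _
    calc (∑ j : Fin n, (a j * ‖(φ : X →L[𝕂] 𝕂) (x j)‖) ^ p.toReal) ^ (1/p.toReal)
        ≤ (Sφ ^ p.toReal) ^ (1/p.toReal) := Real.rpow_le_rpow
          (Finset.sum_nonneg fun j _ => Real.rpow_nonneg
            (mul_nonneg (ha j) (norm_nonneg _)) _) hle (by positivity)
      _ = Sφ := by
          rw [← Real.rpow_mul hSφnn, mul_one_div, div_self hP, Real.rpow_one]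
      _ ≤ weakLpNormE 𝕂 q x := by
          have := wk_le (𝕂 := 𝕂) q x φ
          rwa [if_pos hq] at this
  · -- q finite
    have hq0 : q ≠ 0 := by
      intro h; rw [h] at hq1; exact absurd hq1 (by simp)
    have hQ : q.toReal ≠ 0 := by
      intro h
      rcases ENNReal.toReal_eq_zero_iff q |>.mp h with h | h
      · exact hq0 h
      · exact hq h
    have hQpos : 0 < q.toReal := lt_of_le_of_ne ENNReal.toReal_nonneg (Ne.symm hQ)
    have h1q : (1/q).toReal = 1/q.toReal := by rw [one_div, one_div, ENNReal.toReal_inv]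
    have hrel' : 1/p.toReal = 1/t + 1/q.toReal := by rw [← h1p, ← h1q]; exact hrel
    have hPltt : p.toReal < t := by
      have h2 : 0 < 1/q.toReal := by positivity
      have h3 : 1/t < 1/p.toReal := by linarith
      have h4 : 0 < 1/t := by positivity
      calc p.toReal = 1/(1/p.toReal) := by field_simp
        _ < 1/(1/t) := by
            apply div_lt_div_of_pos_left one_pos (by positivity) h3
        _ = t := by field_simp
    have hconj : (t/p.toReal).HolderConjugate (q.toReal/p.toReal) := by
      rw [Real.holderConjugate_iff]; constructor
      · rw [lt_div_iff₀ hPpos, one_mul]; exact hPltt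
      · rw [inv_div, inv_div]
        field_simp
        field_simp at hrel'
        linarith
    have hholder := Real.inner_le_Lp_mul_Lq_of_nonneg (s := Finset.univ) hconj
      (f := fun j => a j ^ p.toReal) (g := fun j => ‖(φ : X →L[𝕂] 𝕂) (x j)‖ ^ p.toReal)
      (fun j _ => Real.rpow_nonneg (ha j) _) (fun j _ => Real.rpow_nonneg (norm_nonneg _) _)
    have hexp1 : ∀ j : Fin n, (a j ^ p.toReal) ^ (t/p.toReal) = a j ^ t := fun j => by
      rw [← Real.rpow_mul (ha j)]; congr 1; field_simp
    have hexp2 : ∀ j : Fin n, (‖(φ : X →L[𝕂] 𝕂) (x j)‖ ^ p.toReal) ^ (q.toReal/p.toReal)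
        = ‖(φ : X →L[𝕂] 𝕂) (x j)‖ ^ q.toReal := fun j => by
      rw [← Real.rpow_mul (norm_nonneg _)]; congr 1; field_simp
    have hexp3 : ∀ j : Fin n, (a j * ‖(φ : X →L[𝕂] 𝕂) (x j)‖) ^ p.toReal
        = a j ^ p.toReal * ‖(φ : X →L[𝕂] 𝕂) (x j)‖ ^ p.toReal := fun j =>
      Real.mul_rpow (ha j) (norm_nonneg _)
    rw [Finset.sum_congr rfl fun j _ => hexp1 j, Finset.sum_congr rfl fun j _ => hexp2 j]
      at hholder
    have hmain : (∑ j : Fin n, (a j * ‖(φ : X →L[𝕂] 𝕂) (x j)‖) ^ p.toReal)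
        ≤ (∑ j : Fin n, a j ^ t) ^ (1/(t/p.toReal))
          * (∑ j : Fin n, ‖(φ : X →L[𝕂] 𝕂) (x j)‖ ^ q.toReal) ^ (1/(q.toReal/p.toReal)) := by
      rw [Finset.sum_congr rfl fun j _ => hexp3 j]
      exact hholder
    set A := ∑ j : Fin n, a j ^ t with hA
    set Bq := ∑ j : Fin n, ‖(φ : X →L[𝕂] 𝕂) (x j)‖ ^ q.toReal with hBq
    have hAnn : 0 ≤ A := Finset.sum_nonneg fun j _ => Real.rpow_nonneg (ha j) _
    have hBnn : 0 ≤ Bq := Finset.sum_nonneg fun j _ => Real.rpow_nonneg (norm_nonneg _) _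
    calc (∑ j : Fin n, (a j * ‖(φ : X →L[𝕂] 𝕂) (x j)‖) ^ p.toReal) ^ (1/p.toReal)
        ≤ (A ^ (1/(t/p.toReal)) * Bq ^ (1/(q.toReal/p.toReal))) ^ (1/p.toReal) :=
          Real.rpow_le_rpow (Finset.sum_nonneg fun j _ => Real.rpow_nonneg
            (mul_nonneg (ha j) (norm_nonneg _)) _) hmain (by positivity)
      _ = A ^ ((1/(t/p.toReal)) * (1/p.toReal)) * Bq ^ ((1/(q.toReal/p.toReal)) * (1/p.toReal)) := by
          rw [Real.mul_rpow (Real.rpow_nonneg hAnn _) (Real.rpow_nonneg hBnn _),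
            ← Real.rpow_mul hAnn, ← Real.rpow_mul hBnn]
      _ = A ^ (1/t) * Bq ^ (1/q.toReal) := by
          congr 1
          · congr 1; rw [one_div_div]; field_simp
          · congr 1; rw [one_div_div]; field_simp
      _ ≤ 1 * Bq ^ (1/q.toReal) := by
          refine mul_le_mul_of_nonneg_right ?_ (Real.rpow_nonneg hBnn _)
          exact Real.rpow_le_one hAnn hat (by positivity)
      _ = Bq ^ (1/q.toReal) := one_mul _
      _ ≤ weakLpNormE 𝕂 q x := by
          have := wk_le (𝕂 := 𝕂) q x φ
          rwa [if_neg hq] at this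

end WK

end IncAux

/-- **Extended Albuquerque–Rezende inclusion theorem (non-critical case, exponents
allowed to be infinite).**
Let `r ∈ [1,∞)`, `𝐩, 𝐪, 𝐬 ∈ [1,∞]^m` with `q_k ≥ p_k` for all `k = 1,…,m`,
`1/r − |1/𝐩| + |1/𝐪| > 0`, and `1/s_k − |1/𝐪|_{≥k} = 1/r − |1/𝐩|_{≥k}` for all `k`.
If `T` is multiple `(r; 𝐩)`-summing with constant `C`, then `T` is multiple
`(𝐬; 𝐪)`-summing with the same constant `C`. -/
theorem inclusion_theorem_extended (𝕂 : Type*) [RCLike 𝕂] (m : ℕ) (hm : 0 < m)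
    (r : ℝ≥0∞) (hr : 1 ≤ r) (hr' : r ≠ ⊤)
    (p q s : Fin m → ℝ≥0∞) (hp : ∀ k, 1 ≤ p k) (hq : ∀ k, 1 ≤ q k) (hs : ∀ k, 1 ≤ s k)
    (hpq : ∀ k : Fin m, p k ≤ q k)
    (hsum : 0 < (1 / r).toReal - (∑ k : Fin m, (1 / p k).toReal)
        + ∑ k : Fin m, (1 / q k).toReal)
    (hseq : ∀ k : Fin m,
      (1 / s k).toReal - ∑ i ∈ Finset.univ.filter (fun i : Fin m => k ≤ i), (1 / q i).toReal
        = (1 / r).toReal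
          - ∑ i ∈ Finset.univ.filter (fun i : Fin m => k ≤ i), (1 / p i).toReal)
    (X : Fin m → Type*) [∀ k, NormedAddCommGroup (X k)] [∀ k, NormedSpace 𝕂 (X k)]
    [∀ k, CompleteSpace (X k)]
    (Y : Type*) [NormedAddCommGroup Y] [NormedSpace 𝕂 Y] [CompleteSpace Y]
    (T : ContinuousMultilinearMap 𝕂 X Y) (C : ℝ) (hC : 0 < C)
    (hT : IsMultipleSumming 𝕂 T (fun _ => r) p C) :
    IsMultipleSumming 𝕂 T s q C := by
  classical
  have hinvfin : ∀ P : ℝ≥0∞, 1 ≤ P → 1/P ≠ ⊤ := by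
    intro P hP
    rw [one_div, Ne, ENNReal.inv_eq_top]
    intro h; rw [h] at hP; simp at hP
  set d : Fin m → ℝ := fun i => (1/p i).toReal - (1/q i).toReal with hd
  have hd0 : ∀ i, 0 ≤ d i := by
    intro i
    rw [hd]; dsimp only
    have h1 : 1/q i ≤ 1/p i := by
      rw [one_div, one_div]; exact ENNReal.inv_le_inv.mpr (hpq i)
    have h2 := ENNReal.toReal_mono (hinvfin _ (hp i)) h1
    linarith
  set invR : ℕ → ℝ := fun c =>
    (1/r).toReal - ∑ i ∈ Finset.univ.filter (fun i : Fin m => c ≤ (i:ℕ)), d i with hinvR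
  have hfilter0 : Finset.univ.filter (fun i : Fin m => 0 ≤ (i:ℕ)) = Finset.univ := by
    apply Finset.filter_true_of_mem; intro i _; omega
  have hinvR0 : 0 < invR 0 := by
    rw [hinvR]; dsimp only
    rw [hfilter0, hd]; dsimp only
    rw [Finset.sum_sub_distrib]
    linarith
  have hinvR_mono : ∀ c, invR 0 ≤ invR c := by
    intro c
    rw [hinvR]; dsimp only
    apply sub_le_sub_left
    apply Finset.sum_le_sum_of_subset_of_nonneg
    · intro i hi; rw [hfilter0]; exact Finset.mem_univ i
    · intro i _ _; exact hd0 i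
  have hinvRpos : ∀ c, 0 < invR c := fun c => lt_of_lt_of_le hinvR0 (hinvR_mono c)
  have hsinv : ∀ k : Fin m, (1/s k).toReal = invR (k : ℕ) := by
    intro k
    have hfil : Finset.univ.filter (fun i : Fin m => (k:ℕ) ≤ (i:ℕ))
        = Finset.univ.filter (fun i : Fin m => k ≤ i) := by
      apply Finset.filter_congr; intro i _; exact Fin.le_def.symm
    rw [hinvR]; dsimp only
    rw [hfil, hd]; dsimp only
    rw [Finset.sum_sub_distrib]
    have := hseq k
    linarith
  have hsne : ∀ k : Fin m, s k ≠ ⊤ := by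
    intro k h
    have h2 := hsinv k
    rw [h, one_div, ENNReal.inv_top, ENNReal.toReal_zero] at h2
    exact (hinvRpos (k:ℕ)).ne' h2.symm
  have hstoReal : ∀ k : Fin m, (s k).toReal = (invR (k:ℕ))⁻¹ := by
    intro k
    have h1 : (s k).toReal⁻¹ = invR (k:ℕ) := by
      rw [← ENNReal.toReal_inv, ← one_div]; exact hsinv k
    rw [← h1, inv_inv]
  have hsval : ∀ k : Fin m, s k = ENNReal.ofReal (invR (k:ℕ))⁻¹ := by
    intro k
    rw [← hstoReal k, ENNReal.ofReal_toReal (hsne k)]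
  set ES : ℕ → ℝ≥0∞ := fun c => ENNReal.ofReal (invR c)⁻¹ with hES
  have hESne : ∀ c, ES c ≠ ⊤ := fun c => ENNReal.ofReal_ne_top
  have hEStoReal : ∀ c, (ES c).toReal = (invR c)⁻¹ := by
    intro c
    rw [hES]; dsimp only
    rw [ENNReal.toReal_ofReal (inv_nonneg.mpr (hinvRpos c).le)]
  have hES0 : ∀ c, (ES c).toReal ≠ 0 := by
    intro c
    rw [hEStoReal]; exact inv_ne_zero (hinvRpos c).ne'
  set vec : ℕ → Fin m → ℝ≥0∞ := fun c i => if c ≤ (i:ℕ) then s i else ES c with hvec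
  set piv : ℕ → Fin m → ℝ≥0∞ := fun c i => if c ≤ (i:ℕ) then q i else p i with hpiv
  have hPm : IsMultipleSumming 𝕂 T (vec m) (piv m) C := by
    have e1 : vec m = fun _ => r := by
      funext i
      rw [hvec]; dsimp only
      rw [if_neg (by omega : ¬ m ≤ (i:ℕ))]
      have hfil : Finset.univ.filter (fun i : Fin m => m ≤ (i:ℕ)) = ∅ := by
        apply Finset.filter_false_of_mem; intro i _; omega
      have hin : invR m = (1/r).toReal := by
        rw [hinvR]; dsimp only; rw [hfil]; simp
      have h1r : (1/r).toReal = r.toReal⁻¹ := by rw [one_div, ENNReal.toReal_inv]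
      rw [hES]; dsimp only
      rw [hin, h1r, inv_inv, ENNReal.ofReal_toReal hr']
    have e2 : piv m = p := by
      funext i; rw [hpiv]; dsimp only; rw [if_neg (by omega : ¬ m ≤ (i:ℕ))]
    rw [e1, e2]; exact hT
  have hstep : ∀ c : ℕ, c + 1 ≤ m →
      IsMultipleSumming 𝕂 T (vec (c+1)) (piv (c+1)) C →
      IsMultipleSumming 𝕂 T (vec c) (piv c) C := by
    intro c hcm hPc1
    set kc : Fin m := ⟨c, by omega⟩ with hkc
    have hkcval : (kc:ℕ) = c := rfl
    have hfsplit : Finset.univ.filter (fun i : Fin m => c ≤ (i:ℕ))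
        = insert kc (Finset.univ.filter (fun i : Fin m => c+1 ≤ (i:ℕ))) := by
      ext i
      simp only [Finset.mem_filter, Finset.mem_insert, Finset.mem_univ, true_and]
      constructor
      · intro h
        by_cases hic : (i:ℕ) = c
        · left; exact Fin.ext (hic.trans hkcval.symm)
        · right; omega
      · intro h
        rcases h with h | h
        · rw [h, hkcval]
        · omega
    have hknotin : kc ∉ Finset.univ.filter (fun i : Fin m => c+1 ≤ (i:ℕ)) := by
      simp only [Finset.mem_filter, Finset.mem_univ, true_and, hkcval]
      omega
    have hinv_split : invR c = invR (c+1) - d kc := by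
      rw [hinvR]; dsimp only
      rw [hfsplit, Finset.sum_insert hknotin]; ring
    have hsc : s kc = ES c := by rw [hsval kc, hkcval, hES]
    by_cases htc : d kc = 0
    · have hpq_eq : p kc = q kc := by
        have h1 : (1/p kc).toReal = (1/q kc).toReal := by
          rw [hd] at htc; dsimp only at htc; linarith
        have h2 := (ENNReal.toReal_eq_toReal_iff' (hinvfin _ (hp kc)) (hinvfin _ (hq kc))).mp h1
        rw [one_div, one_div] at h2
        have h3 := congrArg (fun z : ℝ≥0∞ => z⁻¹) h2
        simpa using h3
      have hinv_eq : invR c = invR (c+1) := by rw [hinv_split, htc, sub_zero]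
      have e1 : vec c = vec (c+1) := by
        funext i
        rw [hvec]; dsimp only
        by_cases h1 : c+1 ≤ (i:ℕ)
        · rw [if_pos (by omega : c ≤ (i:ℕ)), if_pos h1]
        · by_cases h2 : c ≤ (i:ℕ)
          · have hik : i = kc := Fin.ext (by omega)
            rw [if_pos h2, if_neg h1, hik]
            rw [show s kc = ES c from hsc, hES]; dsimp only
            rw [hinv_eq]
          · rw [if_neg h2, if_neg h1, hES]; dsimp only; rw [hinv_eq]
      have e2 : piv c = piv (c+1) := by
        funext i
        rw [hpiv]; dsimp only
        by_cases h1 : c+1 ≤ (i:ℕ)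
        · rw [if_pos (by omega : c ≤ (i:ℕ)), if_pos h1]
        · by_cases h2 : c ≤ (i:ℕ)
          · have hik : i = kc := Fin.ext (by omega)
            rw [if_pos h2, if_neg h1, hik, hpq_eq]
          · rw [if_neg h2, if_neg h1]
      rw [e1, e2]; exact hPc1
    · -- main case
      have htcpos : 0 < d kc := lt_of_le_of_ne (hd0 kc) (Ne.symm htc)
      have hpTkc : p kc ≠ ⊤ := by
        intro h
        have h3 := htcpos
        rw [hd] at h3; dsimp only at h3
        rw [h, one_div, ENNReal.inv_top, ENNReal.toReal_zero] at h3
        have h2 : 0 ≤ (1/q kc).toReal := ENNReal.toReal_nonneg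
        linarith
      intro n x
      set f : (Fin m → Fin n) → ℝ := fun js => ‖T fun k => x k (js k)‖ with hfdef
      have hf : ∀ js, 0 ≤ f js := fun js => norm_nonneg _
      have hρpos : 0 < (invR (c+1))⁻¹ := inv_pos.mpr (hinvRpos (c+1))
      have hρ'pos : 0 < (invR c)⁻¹ := inv_pos.mpr (hinvRpos c)
      have htrealpos : 0 < (d kc)⁻¹ := inv_pos.mpr htcpos
      have hrelkey : 1/(invR (c+1))⁻¹ = 1/(invR c)⁻¹ + 1/(d kc)⁻¹ := by
        rw [one_div, one_div, one_div, inv_inv, inv_inv, inv_inv, hinv_split]; ring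
      have htail : ∀ i : Fin (m - (c+1)),
          (fun i : Fin (m - (c+1)) => s ⟨c+1+(i:ℕ), by have := i.isLt; omega⟩) i ≠ ⊤
          ∧ (((fun i : Fin (m - (c+1)) => s ⟨c+1+(i:ℕ), by have := i.isLt; omega⟩) i).toReal ≠ 0) := by
        intro i
        refine ⟨hsne _, ?_⟩
        rw [hstoReal]
        exact inv_ne_zero (hinvRpos _).ne'
      set B : (Fin (c+1) → Fin n) → ℝ := fun v =>
        mixedNormE n (m - (c+1)) (fun i => s ⟨c+1+(i:ℕ), by have := i.isLt; omega⟩)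
          (fun w => f (IncAux.splice (c+1) v w)) with hBdef
      have hBnn : ∀ v, 0 ≤ B v := fun v => IncAux.mixed_nonneg n _ _ _ fun w => hf _
      obtain ⟨a, ha0, hat, hkey⟩ := IncAux.key_ineq n c B hBnn hρpos hρ'pos htrealpos hrelkey
      -- flatten LHS
      have hprefL : ∀ i : Fin m, (i:ℕ) < c+1 → vec c i = ES c := by
        intro i hi
        rw [hvec]; dsimp only
        by_cases h2 : c ≤ (i:ℕ)
        · rw [if_pos h2]
          have hik : i = kc := Fin.ext (by omega)
          rw [hik, hsc]
        · rw [if_neg h2]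
      have hflatL := IncAux.flat n (hESne c) (hES0 c) (c+1) (by omega) (vec c) hprefL f hf
      have hexpL : (fun i : Fin (m - (c+1)) => vec c ⟨c + 1 + (i:ℕ), by have := i.isLt; omega⟩)
          = fun i : Fin (m - (c+1)) => s ⟨c+1+(i:ℕ), by have := i.isLt; omega⟩ := by
        funext i
        rw [hvec]; dsimp only
        rw [if_pos (show c ≤ c+1+(i:ℕ) by omega)]
      rw [hexpL, hEStoReal] at hflatL
      -- scaled sequences
      have hb : ∀ (k : Fin m) (j : Fin n), 0 ≤ (if (k:ℕ) = c then a j else 1 : ℝ) := by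
        intro k j; split
        · exact ha0 j
        · exact zero_le_one
      set x' : ∀ k : Fin m, Fin n → X k := fun k j =>
        (((if (k:ℕ) = c then a j else 1 : ℝ) : 𝕂)) • x k j with hx'
      have hTx' : (fun js : Fin m → Fin n => ‖T fun k => x' k (js k)‖)
          = fun js => a (js kc) * f js := by
        funext js
        rw [hx']; dsimp only
        rw [T.map_smul_univ (fun k => (((if (k:ℕ) = c then a (js k) else 1 : ℝ) : 𝕂)))
          (fun k => x k (js k))]
        rw [norm_smul, norm_prod]
        have h1 : ∀ k : Fin m, ‖(((if (k:ℕ) = c then a (js k) else 1 : ℝ) : 𝕂))‖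
            = (if (k:ℕ) = c then a (js k) else 1) := by
          intro k
          rw [RCLike.norm_ofReal, abs_of_nonneg (hb k (js k))]
        rw [Finset.prod_congr rfl fun k _ => h1 k]
        rw [Finset.prod_eq_single kc (fun k _ hk => by
            rw [if_neg (fun h => hk (Fin.ext (h.trans hkcval.symm)))])
          (fun h => absurd (Finset.mem_univ kc) h)]
        rw [if_pos hkcval]
      have hbound := hPc1 n x'
      rw [hTx'] at hbound
      -- flatten RHS
      have hprefR : ∀ i : Fin m, (i:ℕ) < c+1 → vec (c+1) i = ES (c+1) := by
        intro i hi; rw [hvec]; dsimp only; rw [if_neg (by omega)]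
      have hflatR := IncAux.flat n (hESne (c+1)) (hES0 (c+1)) (c+1) (by omega) (vec (c+1)) hprefR
        (fun js => a (js kc) * f js) (fun js => mul_nonneg (ha0 _) (hf js))
      have hexpR : (fun i : Fin (m - (c+1)) => vec (c+1) ⟨c + 1 + (i:ℕ), by have := i.isLt; omega⟩)
          = fun i : Fin (m - (c+1)) => s ⟨c+1+(i:ℕ), by have := i.isLt; omega⟩ := by
        funext i
        rw [hvec]; dsimp only
        rw [if_pos (show c+1 ≤ c+1+(i:ℕ) by omega)]
      rw [hexpR, hEStoReal] at hflatR
      have hinner : ∀ v : Fin (c+1) → Fin n,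
          mixedNormE n (m - (c+1)) (fun i => s ⟨c+1+(i:ℕ), by have := i.isLt; omega⟩)
            (fun w => a ((IncAux.splice (c+1) v w : Fin m → Fin n) kc)
              * f (IncAux.splice (c+1) v w))
          = a (v (Fin.last c)) * B v := by
        intro v
        have hsp : ∀ w : Fin (m - (c+1)) → Fin n,
            (IncAux.splice (c+1) v w : Fin m → Fin n) kc = v (Fin.last c) := by
          intro w
          show (if h : ((kc : Fin m):ℕ) < c+1 then v ⟨((kc : Fin m):ℕ), h⟩ else _)
            = v (Fin.last c)
          rw [dif_pos (show ((kc : Fin m):ℕ) < c+1 by rw [hkcval]; omega)]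
          exact congrArg v (Fin.ext hkcval)
        have e : (fun w => a ((IncAux.splice (c+1) v w : Fin m → Fin n) kc)
              * f (IncAux.splice (c+1) v w))
            = fun w => a (v (Fin.last c)) * f (IncAux.splice (c+1) v w) := by
          funext w; rw [hsp w]
        rw [e]
        exact IncAux.mixed_smul n (m - (c+1)) _ _ (a (v (Fin.last c)))
          (fun w => hf _) (ha0 _) htail
      have hsum_eq : (∑ v : Fin (c+1) → Fin n,
            (mixedNormE n (m - (c+1)) (fun i => s ⟨c+1+(i:ℕ), by have := i.isLt; omega⟩)
              (fun w => a ((IncAux.splice (c+1) v w : Fin m → Fin n) kc)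
                * f (IncAux.splice (c+1) v w))) ^ (invR (c+1))⁻¹)
          = ∑ v : Fin (c+1) → Fin n, (a (v (Fin.last c)) * B v) ^ (invR (c+1))⁻¹ :=
        Finset.sum_congr rfl fun v _ => by rw [hinner v]
      rw [hsum_eq] at hflatR
      -- weak norm comparison
      have hWle : ∀ k : Fin m, weakLpNormE 𝕂 (piv (c+1) k) (x' k)
          ≤ weakLpNormE 𝕂 (piv c k) (x k) := by
        intro k
        by_cases hkeq : k = kc
        · rw [hkeq]
          have hpiv1 : piv (c+1) kc = p kc := by
            rw [hpiv]; dsimp only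
            rw [if_neg (show ¬ c+1 ≤ ((kc : Fin m):ℕ) by rw [hkcval]; omega)]
          have hpiv2 : piv c kc = q kc := by
            rw [hpiv]; dsimp only
            rw [if_pos (show c ≤ ((kc : Fin m):ℕ) by rw [hkcval])]
          have hx'kc : x' kc = fun j => ((a j : ℝ) : 𝕂) • x kc j := by
            funext j; rw [hx']; dsimp only; rw [if_pos hkcval]
          rw [hpiv1, hpiv2, hx'kc]
          exact IncAux.weak_holder (p kc) (q kc) (hp kc) (hq kc) hpTkc ((d kc)⁻¹) htrealpos
            (by
              have hdd : 1/(d kc)⁻¹ = d kc := by rw [one_div, inv_inv]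
              rw [hdd, hd]; dsimp only; ring) a ha0 hat (x kc)
        · have hx'k : x' k = x k := by
            funext j; rw [hx']; dsimp only
            rw [if_neg (fun h => hkeq (Fin.ext (h.trans hkcval.symm)))]
            norm_num
          have hpivk : piv (c+1) k = piv c k := by
            have hkne : (k:ℕ) ≠ c := fun h => hkeq (Fin.ext (h.trans hkcval.symm))
            rw [hpiv]; dsimp only
            by_cases h1 : c ≤ (k:ℕ)
            · rw [if_pos h1, if_pos (by omega)]
            · rw [if_neg h1, if_neg (by omega)]
          rw [hx'k, hpivk]
      calc mixedNormE n m (vec c) f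
          = (∑ v : Fin (c+1) → Fin n, B v ^ (invR c)⁻¹) ^ (1/(invR c)⁻¹) := hflatL
        _ ≤ (∑ v : Fin (c+1) → Fin n, (a (v (Fin.last c)) * B v) ^ (invR (c+1))⁻¹)
              ^ (1/(invR (c+1))⁻¹) := hkey
        _ = mixedNormE n m (vec (c+1)) (fun js => a (js kc) * f js) := hflatR.symm
        _ ≤ C * ∏ k : Fin m, weakLpNormE 𝕂 (piv (c+1) k) (x' k) := hbound
        _ ≤ C * ∏ k : Fin m, weakLpNormE 𝕂 (piv c k) (x k) := by
            refine mul_le_mul_of_nonneg_left ?_ hC.le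
            exact Finset.prod_le_prod (fun k _ => IncAux.wk_nonneg _ _) (fun k _ => hWle k)
  have hdesc : ∀ dd c : ℕ, c + dd = m → IsMultipleSumming 𝕂 T (vec c) (piv c) C := by
    intro dd
    induction dd with
    | zero => intro c hc; have : c = m := by omega
              subst this; exact hPm
    | succ dd ih =>
      intro c hc
      exact hstep c (by omega) (ih (c+1) (by omega))
  have hP0 := hdesc m 0 (by omega)
  have e1 : vec 0 = s := by
    funext i; rw [hvec]; dsimp only; rw [if_pos (by omega)]
  have e2 : piv 0 = q := by
    funext i; rw [hpiv]; dsimp only; rw [if_pos (by omega)]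
  rw [e1, e2] at hP0
  exact hP0
end

section
/- Let a, b ∈ (0, ∞]. The following assertions are equivalent: (a) for all positive integers n and all bilinear forms U : ℓ_2^n × ℓ_2^n → 𝕂, ( Σ_{i=1}^n ( Σ_{j=1}^n |U(e_i, e_j)|^a )^{b/a} )^{1/b} ≤ ‖U‖, where any sum with an infinite exponent is replaced by the supremum over the corresponding index; (b) b = ∞ and a ≥ 2. -/
open scoped ENNReal

/-- The `ℓ_p` "norm" of a finite family of (nonnegative) reals, for `p ∈ (0,∞]`:
`(Σ_i f_i^p)^{1/p}` for finite `p`, and `sup_i f_i` when `p = ∞`. -/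
noncomputable def lpNormFin (p : ℝ≥0∞) {n : ℕ} (f : Fin n → ℝ) : ℝ :=
  if p = ⊤ then ⨆ i, f i else (∑ i, f i ^ p.toReal) ^ (1 / p.toReal)

section Aux
variable {𝕂 : Type*} [RCLike 𝕂] {n : ℕ}

/-- decomposition of a Euclidean vector in the canonical basis -/
lemma eucl_decomp (y : EuclideanSpace 𝕂 (Fin n)) :
    y = ∑ j, y j • EuclideanSpace.single j 1 := by
  ext k
  rw [show ((∑ j, y j • EuclideanSpace.single j (1:𝕂)) k) = ∑ j, (y j • EuclideanSpace.single j (1:𝕂)) k from by rw [WithLp.ofLp_sum]; exact Finset.sum_apply k Finset.univ _]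
  simp [EuclideanSpace.single_apply]

/-- ℓ2 norm of a row of a bilinear form is at most its norm -/
lemma row_l2_le (U : EuclideanSpace 𝕂 (Fin n) →L[𝕂] EuclideanSpace 𝕂 (Fin n) →L[𝕂] 𝕂)
    (i : Fin n) :
    Real.sqrt (∑ j, ‖U (EuclideanSpace.single i 1) (EuclideanSpace.single j 1)‖ ^ 2) ≤ ‖U‖ := by
  set c : Fin n → 𝕂 := fun j => U (EuclideanSpace.single i 1) (EuclideanSpace.single j 1) with hc
  set y : EuclideanSpace 𝕂 (Fin n) := WithLp.toLp 2 (fun j => (starRingEnd 𝕂) (c j)) with hy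
  set S : ℝ := ∑ j, ‖c j‖ ^ 2 with hS
  have hS0 : 0 ≤ S := Finset.sum_nonneg fun j _ => sq_nonneg _
  have hval : U (EuclideanSpace.single i 1) y = (S : 𝕂) := by
    conv_lhs => rw [eucl_decomp y]
    rw [map_sum]
    simp only [map_smul, smul_eq_mul]
    rw [hS]
    push_cast
    exact Finset.sum_congr rfl fun j _ => by rw [hy]; simp only [← hc]; rw [RCLike.conj_mul]
  have hyn : ‖y‖ = Real.sqrt S := by
    rw [EuclideanSpace.norm_eq, hS]
    congr 1
    refine Finset.sum_congr rfl fun j _ => ?_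
    simp [hy]
  have hle : ‖U (EuclideanSpace.single i 1) y‖ ≤ ‖U‖ * Real.sqrt S := by
    calc ‖U (EuclideanSpace.single i 1) y‖ ≤ ‖U‖ * ‖EuclideanSpace.single i (1:𝕂)‖ * ‖y‖ :=
          U.le_opNorm₂ _ _
    _ = ‖U‖ * Real.sqrt S := by rw [EuclideanSpace.norm_single, hyn]; simp
  rw [hval] at hle
  have : S ≤ ‖U‖ * Real.sqrt S := by
    simpa [RCLike.norm_ofReal, abs_of_nonneg hS0] using hle
  rcases eq_or_lt_of_le hS0 with h0 | h0
  · simp [← h0]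
    exact (norm_nonneg U)
  · have hs : 0 < Real.sqrt S := Real.sqrt_pos.mpr h0
    nlinarith [Real.sq_sqrt hS0]

lemma lp_le_l2 {p : ℝ} (hp : 2 ≤ p) (t : Fin n → ℝ) (ht : ∀ j, 0 ≤ t j) :
    (∑ j, t j ^ p) ^ (1/p) ≤ Real.sqrt (∑ j, t j ^ 2) := by
  have hp0 : (0:ℝ) < p := lt_of_lt_of_le (by norm_num) hp
  set S : ℝ := ∑ j, t j ^ 2 with hS
  have hS0 : 0 ≤ S := Finset.sum_nonneg fun j _ => sq_nonneg _
  have hhalf : (0:ℝ) ≤ p/2 - 1 := by linarith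
  have key : ∑ j, t j ^ p ≤ S ^ (p/2) := by
    have step : ∀ j : Fin n, t j ^ p ≤ t j ^ 2 * S ^ (p/2 - 1) := by
      intro j
      have h1 : t j ^ p = (t j ^ 2 : ℝ) ^ (p/2) := by
        rw [← Real.rpow_natCast (t j) 2, ← Real.rpow_mul (ht j)]
        congr 1
        push_cast
        ring
      have h2 : (t j ^ 2 : ℝ) ^ (p/2) = (t j ^ 2) * (t j ^ 2 : ℝ) ^ (p/2 - 1) := by
        rw [show p/2 = 1 + (p/2 - 1) by ring, Real.rpow_add' (sq_nonneg _) (by linarith)]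
        rw [Real.rpow_one]
        ring_nf
      rw [h1, h2]
      refine mul_le_mul_of_nonneg_left ?_ (sq_nonneg _)
      exact Real.rpow_le_rpow (sq_nonneg _)
        (Finset.single_le_sum (fun j _ => sq_nonneg (t j)) (Finset.mem_univ j)) hhalf
    calc ∑ j, t j ^ p ≤ ∑ j, t j ^ 2 * S ^ (p/2 - 1) := Finset.sum_le_sum fun j _ => step j
      _ = S * S ^ (p/2 - 1) := by rw [← Finset.sum_mul]
      _ = S ^ (p/2) := by
          rw [show p/2 = 1 + (p/2 - 1) by ring, Real.rpow_add' hS0 (by linarith), Real.rpow_one]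
          ring_nf
  calc (∑ j, t j ^ p) ^ (1/p) ≤ (S ^ (p/2)) ^ (1/p) :=
        Real.rpow_le_rpow (Finset.sum_nonneg fun j _ => Real.rpow_nonneg (ht j) p) key
          (by positivity)
    _ = S ^ (1/2 : ℝ) := by
        rw [← Real.rpow_mul hS0]
        congr 1
        field_simp
    _ = Real.sqrt S := (Real.sqrt_eq_rpow S).symm

noncomputable def idForm (𝕂 : Type*) [RCLike 𝕂] (n : ℕ) :
    EuclideanSpace 𝕂 (Fin n) →L[𝕂] EuclideanSpace 𝕂 (Fin n) →L[𝕂] 𝕂 :=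
  LinearMap.mkContinuous₂
    (LinearMap.mk₂ 𝕂 (fun x y => ∑ j, x j * y j)
      (fun x x' y => by simp [add_mul, Finset.sum_add_distrib])
      (fun c x y => by simp [Finset.mul_sum, mul_assoc])
      (fun x y y' => by simp [mul_add, Finset.sum_add_distrib])
      (fun c x y => by simp [Finset.mul_sum]; exact Finset.sum_congr rfl fun j _ => by ring))
    1
    (fun x y => by
      simp only [LinearMap.mk₂_apply, one_mul]
      calc ‖∑ j, x j * y j‖ ≤ ∑ j, ‖x j * y j‖ := norm_sum_le _ _
        _ = ∑ j, ‖x j‖ * ‖y j‖ := by simp [norm_mul]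
        _ ≤ Real.sqrt (∑ j, ‖x j‖^2) * Real.sqrt (∑ j, ‖y j‖^2) :=
            Real.sum_mul_le_sqrt_mul_sqrt _ _ _
        _ = ‖x‖ * ‖y‖ := by rw [EuclideanSpace.norm_eq, EuclideanSpace.norm_eq])

lemma idForm_norm_le : ‖idForm 𝕂 n‖ ≤ 1 :=
  LinearMap.mkContinuous₂_norm_le _ zero_le_one _

lemma idForm_entry (i j : Fin n) :
    idForm 𝕂 n (EuclideanSpace.single i 1) (EuclideanSpace.single j 1)
      = if i = j then 1 else 0 := by
  have : idForm 𝕂 n (EuclideanSpace.single i 1) (EuclideanSpace.single j 1)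
      = ∑ k, (EuclideanSpace.single i (1:𝕂)) k * (EuclideanSpace.single j (1:𝕂)) k := rfl
  rw [this]
  simp [EuclideanSpace.single_apply, Finset.sum_ite_eq, eq_comm]

noncomputable def rowForm (𝕂 : Type*) [RCLike 𝕂] :
    EuclideanSpace 𝕂 (Fin 2) →L[𝕂] EuclideanSpace 𝕂 (Fin 2) →L[𝕂] 𝕂 :=
  LinearMap.mkContinuous₂
    (LinearMap.mk₂ 𝕂 (fun x y => x 0 * (y 0 + y 1))
      (fun x x' y => by simp [add_mul])
      (fun c x y => by simp [mul_assoc])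
      (fun x y y' => by simp; ring)
      (fun c x y => by simp; ring))
    (Real.sqrt 2)
    (fun x y => by
      simp only [LinearMap.mk₂_apply]
      have hx : ‖x 0‖ ≤ ‖x‖ := by
        rw [EuclideanSpace.norm_eq, Fin.sum_univ_two]
        calc ‖x 0‖ = Real.sqrt (‖x 0‖^2) := (Real.sqrt_sq (norm_nonneg _)).symm
          _ ≤ Real.sqrt (‖x 0‖^2 + ‖x 1‖^2) :=
              Real.sqrt_le_sqrt (by nlinarith [sq_nonneg ‖x 1‖])
      have hy : ‖y 0 + y 1‖ ≤ Real.sqrt 2 * ‖y‖ := by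
        rw [EuclideanSpace.norm_eq, Fin.sum_univ_two, ← Real.sqrt_mul (by norm_num)]
        calc ‖y 0 + y 1‖ ≤ ‖y 0‖ + ‖y 1‖ := norm_add_le _ _
          _ = Real.sqrt ((‖y 0‖ + ‖y 1‖)^2) := (Real.sqrt_sq (by positivity)).symm
          _ ≤ Real.sqrt (2 * (‖y 0‖^2 + ‖y 1‖^2)) :=
              Real.sqrt_le_sqrt (by nlinarith [sq_nonneg (‖y 0‖ - ‖y 1‖)])
      calc ‖x 0 * (y 0 + y 1)‖ = ‖x 0‖ * ‖y 0 + y 1‖ := norm_mul _ _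
        _ ≤ ‖x‖ * (Real.sqrt 2 * ‖y‖) :=
            mul_le_mul hx hy (norm_nonneg _) (norm_nonneg _)
        _ = Real.sqrt 2 * ‖x‖ * ‖y‖ := by ring)

lemma rowForm_norm_le : ‖rowForm 𝕂‖ ≤ Real.sqrt 2 :=
  LinearMap.mkContinuous₂_norm_le _ (Real.sqrt_nonneg 2) _

lemma rowForm_entry (i j : Fin 2) :
    rowForm 𝕂 (EuclideanSpace.single i 1) (EuclideanSpace.single j 1)
      = if i = 0 then 1 else 0 := by
  have : rowForm 𝕂 (EuclideanSpace.single i 1) (EuclideanSpace.single j 1)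
      = (EuclideanSpace.single i (1:𝕂)) 0 *
        ((EuclideanSpace.single j (1:𝕂)) 0 + (EuclideanSpace.single j (1:𝕂)) 1) := rfl
  rw [this]
  simp [EuclideanSpace.single_apply]
  fin_cases j <;> simp [eq_comm]

end Aux

/-- **The critical bilinear case is sharp in a strong sense.** -/
theorem bilinear_critical_hl_iff (𝕂 : Type*) [RCLike 𝕂] (a b : ℝ≥0∞)
    (ha : 0 < a) (hb : 0 < b) :
    (∀ n : ℕ, 0 < n →
      ∀ U : EuclideanSpace 𝕂 (Fin n) →L[𝕂] EuclideanSpace 𝕂 (Fin n) →L[𝕂] 𝕂,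
        lpNormFin b (fun i : Fin n => lpNormFin a (fun j : Fin n =>
          ‖U (EuclideanSpace.single i 1) (EuclideanSpace.single j 1)‖)) ≤ ‖U‖)
      ↔ (b = ⊤ ∧ 2 ≤ a) := by
  constructor
  · intro H
    -- first, b = ⊤
    have hbtop : b = ⊤ := by
      by_contra hbT
      have hbt : 0 < b.toReal := ENNReal.toReal_pos hb.ne' hbT
      have h2 := H 2 (by norm_num) (idForm 𝕂 2)
      have hinner : ∀ i : Fin 2, lpNormFin a (fun j : Fin 2 =>
          ‖idForm 𝕂 2 (EuclideanSpace.single i 1) (EuclideanSpace.single j 1)‖) = 1 := by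
        intro i
        have hfe : (fun j : Fin 2 =>
            ‖idForm 𝕂 2 (EuclideanSpace.single i 1) (EuclideanSpace.single j 1)‖)
            = fun j => if i = j then 1 else 0 := by
          funext j
          rw [idForm_entry]
          split <;> simp
        rw [hfe]
        by_cases haT : a = ⊤
        · rw [lpNormFin, if_pos haT]
          refine le_antisymm (ciSup_le fun j => by split <;> norm_num) ?_
          have := le_ciSup (f := fun j : Fin 2 => if i = j then (1:ℝ) else 0)
            (Set.Finite.bddAbove (Set.finite_range _)) i
          simpa using this
        · have hat : 0 < a.toReal := ENNReal.toReal_pos ha.ne' haT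
          rw [lpNormFin, if_neg haT]
          have : ∑ j : Fin 2, (if i = j then (1:ℝ) else 0) ^ a.toReal = 1 := by
            fin_cases i <;>
              simp [Fin.sum_univ_two, Real.zero_rpow hat.ne', Real.one_rpow]
          rw [this, Real.one_rpow]
      simp only [hinner] at h2
      rw [lpNormFin, if_neg hbT] at h2
      have hsum : ∑ _i : Fin 2, (1:ℝ) ^ b.toReal = 2 := by
        simp [Fin.sum_univ_two]
      rw [hsum] at h2
      have hlt : (1:ℝ) < 2 ^ (1/b.toReal) :=
        Real.one_lt_rpow_iff_of_pos (by norm_num) |>.mpr (Or.inl ⟨by norm_num, by positivity⟩)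
      have := h2.trans idForm_norm_le
      linarith
    refine ⟨hbtop, ?_⟩
    by_contra haL
    push_neg at haL
    have haT : a ≠ ⊤ := haL.ne_top
    have hat : 0 < a.toReal := ENNReal.toReal_pos ha.ne' haT
    have hat2 : a.toReal < 2 := by
      have := (ENNReal.toReal_lt_toReal haT (by norm_num : (2:ℝ≥0∞) ≠ ⊤)).mpr haL
      simpa using this
    have h2 := H 2 (by norm_num) (rowForm 𝕂)
    have hinner0 : lpNormFin a (fun j : Fin 2 =>
        ‖rowForm 𝕂 (EuclideanSpace.single 0 1) (EuclideanSpace.single j 1)‖)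
        = 2 ^ (1/a.toReal) := by
      have hfe : (fun j : Fin 2 =>
          ‖rowForm 𝕂 (EuclideanSpace.single 0 1) (EuclideanSpace.single j 1)‖)
          = fun _ => (1:ℝ) := by
        funext j
        rw [rowForm_entry]
        simp
      rw [hfe, lpNormFin, if_neg haT]
      simp [Fin.sum_univ_two]
    rw [lpNormFin, if_pos hbtop] at h2
    have hge : (2:ℝ) ^ (1/a.toReal) ≤ ‖rowForm 𝕂‖ := by
      refine le_trans ?_ h2
      rw [← hinner0]
      exact le_ciSup (f := fun i : Fin 2 => lpNormFin a fun j =>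
        ‖rowForm 𝕂 (EuclideanSpace.single i 1) (EuclideanSpace.single j 1)‖)
        (Set.Finite.bddAbove (Set.finite_range _)) 0
    have hlt : Real.sqrt 2 < 2 ^ (1/a.toReal) := by
      rw [Real.sqrt_eq_rpow]
      refine Real.rpow_lt_rpow_of_exponent_lt (by norm_num) ?_
      rw [div_lt_div_iff₀ (by norm_num) hat]
      linarith
    have := hge.trans rowForm_norm_le
    linarith
  · rintro ⟨rfl, h2a⟩ n hn U
    haveI : Nonempty (Fin n) := Fin.pos_iff_nonempty.mp hn
    rw [lpNormFin, if_pos rfl]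
    refine ciSup_le fun i => ?_
    by_cases haT : a = ⊤
    · rw [lpNormFin, if_pos haT]
      refine ciSup_le fun j => ?_
      calc ‖U (EuclideanSpace.single i 1) (EuclideanSpace.single j 1)‖
          ≤ ‖U‖ * ‖EuclideanSpace.single i (1:𝕂)‖ * ‖EuclideanSpace.single j (1:𝕂)‖ :=
            U.le_opNorm₂ _ _
        _ = ‖U‖ := by rw [EuclideanSpace.norm_single, EuclideanSpace.norm_single]; simp
    · rw [lpNormFin, if_neg haT]
      have hta : 2 ≤ a.toReal := by
        have := (ENNReal.toReal_le_toReal (by norm_num : (2:ℝ≥0∞) ≠ ⊤) haT).mpr h2a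
        simpa using this
      calc (∑ j, ‖U (EuclideanSpace.single i 1) (EuclideanSpace.single j 1)‖ ^ a.toReal)
            ^ (1/a.toReal)
          ≤ Real.sqrt (∑ j, ‖U (EuclideanSpace.single i 1) (EuclideanSpace.single j 1)‖ ^ 2) :=
            lp_le_l2 hta _ (fun j => norm_nonneg _)
        _ ≤ ‖U‖ := row_l2_le U i
end

section
/- Let a ∈ (0, ∞), b ∈ (0, ∞), t_1 ≥ 0, and C > 0. If for all positive integers n and all bilinear forms U : ℓ_2^n × ℓ_2^n → 𝕂 one has ( Σ_{i=1}^{n} ( Σ_{j=1}^{n} |U(e_i, e_j)|^a )^{b/a} )^{1/b} ≤ C n^{t_1} n^{1/a − 1/2} ‖U‖, then t_1 ≥ 1/b. -/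
open Finset

namespace BilinOpt

/-- Real Walsh matrix entry, indexed by bit vectors. -/
def Wr {k : ℕ} (u v : Fin k → Bool) : ℝ :=
  ∏ t, (if u t && v t then (-1 : ℝ) else 1)

lemma abs_Wr {k : ℕ} (u v : Fin k → Bool) : |Wr u v| = 1 := by
  rw [Wr, Finset.abs_prod]
  refine Finset.prod_eq_one fun t _ => ?_
  split <;> simp

lemma Wr_orth {k : ℕ} (u u' : Fin k → Bool) :
    ∑ v : Fin k → Bool, Wr u v * Wr u' v = if u = u' then ((2 ^ k : ℕ) : ℝ) else 0 := by
  have h1 : ∀ v : Fin k → Bool, Wr u v * Wr u' v =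
      ∏ t, ((if u t && v t then (-1 : ℝ) else 1) * (if u' t && v t then (-1 : ℝ) else 1)) := by
    intro v; rw [Wr, Wr, ← Finset.prod_mul_distrib]
  simp only [h1]
  rw [← Fintype.prod_sum (fun t (b : Bool) =>
      (if u t && b then (-1 : ℝ) else 1) * (if u' t && b then (-1 : ℝ) else 1))]
  have h2 : ∀ t, (∑ b : Bool, (if u t && b then (-1 : ℝ) else 1) *
      (if u' t && b then (-1 : ℝ) else 1)) = if u t = u' t then 2 else 0 := by
    intro t
    cases hu : u t <;> cases hu' : u' t <;> simp [Fintype.sum_bool] <;> norm_num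
  simp only [h2]
  by_cases h : u = u'
  · subst h; simp [Finset.prod_const]
  · obtain ⟨t, ht⟩ := Function.ne_iff.mp h
    rw [if_neg h]
    exact Finset.prod_eq_zero (Finset.mem_univ t) (if_neg ht)

noncomputable def eqv (k : ℕ) : Fin (2 ^ k) ≃ (Fin k → Bool) :=
  (Fintype.equivFinOfCardEq (by simp)).symm

/-- The Walsh matrix reindexed by `Fin (2^k)`. -/
noncomputable def M (k : ℕ) (i j : Fin (2 ^ k)) : ℝ := Wr (eqv k i) (eqv k j)

lemma abs_M (k : ℕ) (i j : Fin (2 ^ k)) : |M k i j| = 1 := abs_Wr _ _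

lemma M_orth (k : ℕ) (i i' : Fin (2 ^ k)) :
    ∑ j, M k i j * M k i' j = if i = i' then ((2 ^ k : ℕ) : ℝ) else 0 := by
  have h := Equiv.sum_comp (eqv k) (fun v => Wr (eqv k i) v * Wr (eqv k i') v)
  simp only [M]
  rw [h, Wr_orth]
  simp [Equiv.apply_eq_iff_eq]

variable (𝕂 : Type*) [RCLike 𝕂]

lemma M_orth_K (k : ℕ) (i i' : Fin (2 ^ k)) :
    ∑ j, ((M k i j : 𝕂) * (M k i' j : 𝕂)) = if i = i' then ((2 ^ k : ℕ) : 𝕂) else 0 := by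
  have h := M_orth k i i'
  calc ∑ j, ((M k i j : 𝕂) * (M k i' j : 𝕂))
      = ((∑ j, M k i j * M k i' j : ℝ) : 𝕂) := by push_cast; rfl
    _ = _ := by rw [h]; split <;> push_cast <;> rfl

noncomputable def Bfun (k : ℕ) (x y : EuclideanSpace 𝕂 (Fin (2 ^ k))) : 𝕂 :=
  ∑ i, ∑ j, (M k i j : 𝕂) * (x i * y j)

lemma Bfun_bound (k : ℕ) (x y : EuclideanSpace 𝕂 (Fin (2 ^ k))) :
    ‖Bfun 𝕂 k x y‖ ≤ ((2 ^ k : ℕ) : ℝ) ^ ((1 : ℝ) / 2) * ‖x‖ * ‖y‖ := by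
  classical
  set c : EuclideanSpace 𝕂 (Fin (2 ^ k)) := WithLp.toLp 2 (fun j => ∑ i, (M k i j : 𝕂) * x i) with hc
  have h1 : Bfun 𝕂 k x y = ∑ j, c j * y j := by
    rw [Bfun, Finset.sum_comm]
    refine Finset.sum_congr rfl fun j _ => ?_
    rw [hc]; simp only [Finset.sum_mul, mul_assoc]
  set z : EuclideanSpace 𝕂 (Fin (2 ^ k)) := WithLp.toLp 2 (fun j => starRingEnd 𝕂 (c j)) with hz
  have h2 : (inner 𝕂 z y : 𝕂) = ∑ j, c j * y j := by
    simp [PiLp.inner_apply, hz, mul_comm]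
  have h3 : ‖z‖ = ‖c‖ := by
    simp [EuclideanSpace.norm_eq, hz]
  -- compute ⟪c,c⟫
  have h4 : (inner 𝕂 c c : 𝕂) = ((2 ^ k : ℕ) : 𝕂) * inner 𝕂 x x := by
    simp only [PiLp.inner_apply, RCLike.inner_apply', hc, WithLp.ofLp_toLp]
    have expand : ∀ j, (starRingEnd 𝕂 (∑ i, (M k i j : 𝕂) * x i)) * (∑ i, (M k i j : 𝕂) * x i)
        = ∑ i, ∑ i', ((M k i j : 𝕂) * (M k i' j : 𝕂)) *
            (starRingEnd 𝕂 (x i) * x i') := by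
      intro j
      rw [map_sum, Finset.sum_mul_sum]
      refine Finset.sum_congr rfl fun i _ => Finset.sum_congr rfl fun i' _ => ?_
      rw [map_mul, RCLike.conj_ofReal]
      ring
    simp only [expand]
    rw [Finset.sum_comm]
    have inner_j : ∀ i, (∑ j, ∑ i', ((M k i j : 𝕂) * (M k i' j : 𝕂)) *
        (starRingEnd 𝕂 (x i) * x i'))
        = ((2 ^ k : ℕ) : 𝕂) * (starRingEnd 𝕂 (x i) * x i) := by
      intro i
      rw [Finset.sum_comm]
      have : ∀ i', (∑ j, ((M k i j : 𝕂) * (M k i' j : 𝕂)) * (starRingEnd 𝕂 (x i) * x i'))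
          = (if i = i' then ((2 ^ k : ℕ) : 𝕂) else 0) * (starRingEnd 𝕂 (x i) * x i') := by
        intro i'
        rw [← Finset.sum_mul, M_orth_K]
      simp only [this, ite_mul, zero_mul]
      rw [Finset.sum_ite_eq (Finset.univ : Finset (Fin (2 ^ k))) i
        (fun i' => ((2 ^ k : ℕ) : 𝕂) * (starRingEnd 𝕂 (x i) * x i'))]
      simp
    simp only [inner_j]
    rw [← Finset.mul_sum]
  -- ‖c‖ ≤ √n ‖x‖
  have hnn : (0 : ℝ) ≤ ((2 ^ k : ℕ) : ℝ) ^ ((1 : ℝ) / 2) := Real.rpow_nonneg (by positivity) _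
  have h5 : ‖c‖ ≤ ((2 ^ k : ℕ) : ℝ) ^ ((1 : ℝ) / 2) * ‖x‖ := by
    have hsq : ‖c‖ ^ 2 = ((2 ^ k : ℕ) : ℝ) * ‖x‖ ^ 2 := by
      have := congrArg RCLike.re h4
      rwa [inner_self_eq_norm_sq, RCLike.mul_re, inner_self_eq_norm_sq,
        RCLike.natCast_re, RCLike.natCast_im, zero_mul, sub_zero] at this
    have hrhs : (((2 ^ k : ℕ) : ℝ) ^ ((1 : ℝ) / 2) * ‖x‖) ^ 2 = ((2 ^ k : ℕ) : ℝ) * ‖x‖ ^ 2 := by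
      rw [mul_pow, ← Real.rpow_natCast (((2 ^ k : ℕ) : ℝ) ^ ((1 : ℝ) / 2)) 2,
        ← Real.rpow_mul (by positivity)]
      norm_num
    nlinarith [hsq, hrhs, norm_nonneg c, mul_nonneg hnn (norm_nonneg x)]
  calc ‖Bfun 𝕂 k x y‖ = ‖(inner 𝕂 z y : 𝕂)‖ := by rw [h1, h2]
    _ ≤ ‖z‖ * ‖y‖ := norm_inner_le_norm z y
    _ = ‖c‖ * ‖y‖ := by rw [h3]
    _ ≤ (((2 ^ k : ℕ) : ℝ) ^ ((1 : ℝ) / 2) * ‖x‖) * ‖y‖ :=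
        mul_le_mul_of_nonneg_right h5 (norm_nonneg y)
    _ = _ := by rw [mul_assoc]

noncomputable def Bform (k : ℕ) :
    EuclideanSpace 𝕂 (Fin (2 ^ k)) →ₗ[𝕂] EuclideanSpace 𝕂 (Fin (2 ^ k)) →ₗ[𝕂] 𝕂 :=
  LinearMap.mk₂ 𝕂 (Bfun 𝕂 k)
    (fun x x' y => by
      simp only [Bfun, PiLp.add_apply, add_mul, mul_add, Finset.sum_add_distrib])
    (fun c x y => by
      simp only [Bfun, PiLp.smul_apply, smul_eq_mul, Finset.mul_sum]
      exact Finset.sum_congr rfl fun i _ => Finset.sum_congr rfl fun j _ => by ring)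
    (fun x y y' => by
      simp only [Bfun, PiLp.add_apply, add_mul, mul_add, Finset.sum_add_distrib])
    (fun c x y => by
      simp only [Bfun, PiLp.smul_apply, smul_eq_mul, Finset.mul_sum]
      exact Finset.sum_congr rfl fun i _ => Finset.sum_congr rfl fun j _ => by ring)

noncomputable def Uop (k : ℕ) :
    EuclideanSpace 𝕂 (Fin (2 ^ k)) →L[𝕂] EuclideanSpace 𝕂 (Fin (2 ^ k)) →L[𝕂] 𝕂 :=
  LinearMap.mkContinuous₂ (Bform 𝕂 k) (((2 ^ k : ℕ) : ℝ) ^ ((1 : ℝ) / 2))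
    (fun x y => Bfun_bound 𝕂 k x y)

lemma Uop_norm_le (k : ℕ) : ‖Uop 𝕂 k‖ ≤ ((2 ^ k : ℕ) : ℝ) ^ ((1 : ℝ) / 2) :=
  LinearMap.mkContinuous₂_norm_le _ (Real.rpow_nonneg (by positivity) _) _

lemma Uop_apply_single (k : ℕ) (i j : Fin (2 ^ k)) :
    Uop 𝕂 k (EuclideanSpace.single i 1) (EuclideanSpace.single j 1) = (M k i j : 𝕂) := by
  show Bfun 𝕂 k _ _ = _
  rw [Bfun]
  simp [EuclideanSpace.single_apply, Finset.mul_sum, mul_ite, ite_mul]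

lemma Uop_norm_single (k : ℕ) (i j : Fin (2 ^ k)) :
    ‖Uop 𝕂 k (EuclideanSpace.single i 1) (EuclideanSpace.single j 1)‖ = 1 := by
  rw [Uop_apply_single, RCLike.norm_ofReal, abs_M]

end BilinOpt

/-- **Optimality of the exponent `t_1 = 1/b` (given `t_2 = 1/a − 1/2`).**
Let `a, b ∈ (0,∞)`, `t_1 ≥ 0`, `C > 0`.  If
`( Σ_{i=1}^n ( Σ_{j=1}^n |U(e_i,e_j)|^a )^{b/a} )^{1/b} ≤ C n^{t_1} n^{1/a − 1/2} ‖U‖`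
for all `n` and all bilinear forms `U : ℓ_2^n × ℓ_2^n → 𝕂`, then `t_1 ≥ 1/b`. -/
theorem bilinear_optimal_t1 (𝕂 : Type*) [RCLike 𝕂] (a b : ℝ) (ha : 0 < a) (hb : 0 < b)
    (t1 : ℝ) (ht1 : 0 ≤ t1) (C : ℝ) (hC : 0 < C)
    (h : ∀ n : ℕ, 0 < n →
      ∀ U : EuclideanSpace 𝕂 (Fin n) →L[𝕂] EuclideanSpace 𝕂 (Fin n) →L[𝕂] 𝕂,
        (∑ i : Fin n,
            (∑ j : Fin n,
              ‖U (EuclideanSpace.single i 1) (EuclideanSpace.single j 1)‖ ^ a) ^ (b / a))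
          ^ (1 / b)
          ≤ C * (n : ℝ) ^ t1 * (n : ℝ) ^ (1 / a - 1 / 2) * ‖U‖) :
    1 / b ≤ t1 := by
  by_contra hcon
  push_neg at hcon
  -- key estimate for n = 2^k
  have key : ∀ k : ℕ, ((2 ^ k : ℕ) : ℝ) ^ (1 / b - t1) ≤ C := by
    intro k
    set n : ℕ := 2 ^ k with hnk
    have hn : 0 < n := by positivity
    have hnR : (0 : ℝ) < (n : ℝ) := by exact_mod_cast hn
    have hU := h n hn (BilinOpt.Uop 𝕂 k)
    -- compute the LHS
    have hLHS : (∑ i : Fin n,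
            (∑ j : Fin n,
              ‖BilinOpt.Uop 𝕂 k (EuclideanSpace.single i 1) (EuclideanSpace.single j 1)‖ ^ a)
              ^ (b / a)) ^ (1 / b)
        = ((n : ℝ) * (n : ℝ) ^ (b / a)) ^ (1 / b) := by
      simp only [BilinOpt.Uop_norm_single, Real.one_rpow, Finset.sum_const,
        Finset.card_univ, Fintype.card_fin, nsmul_eq_mul, mul_one]
    rw [hLHS] at hU
    -- bound ‖U‖
    have hUn : ‖BilinOpt.Uop 𝕂 k‖ ≤ (n : ℝ) ^ ((1 : ℝ) / 2) := BilinOpt.Uop_norm_le 𝕂 k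
    have hmulpos : (0 : ℝ) ≤ C * (n : ℝ) ^ t1 * (n : ℝ) ^ (1 / a - 1 / 2) := by positivity
    have hU2 : ((n : ℝ) * (n : ℝ) ^ (b / a)) ^ (1 / b)
        ≤ C * (n : ℝ) ^ t1 * (n : ℝ) ^ (1 / a - 1 / 2) * (n : ℝ) ^ ((1 : ℝ) / 2) :=
      hU.trans (mul_le_mul_of_nonneg_left hUn hmulpos)
    -- simplify both sides as powers of n
    have hL : ((n : ℝ) * (n : ℝ) ^ (b / a)) ^ (1 / b) = (n : ℝ) ^ (1 / b + 1 / a) := by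
      have e1 : (n : ℝ) * (n : ℝ) ^ (b / a) = (n : ℝ) ^ (1 + b / a) := by
        rw [Real.rpow_add hnR, Real.rpow_one]
      rw [e1, ← Real.rpow_mul hnR.le]
      congr 1
      field_simp
    have hR : C * (n : ℝ) ^ t1 * (n : ℝ) ^ (1 / a - 1 / 2) * (n : ℝ) ^ ((1 : ℝ) / 2)
        = C * (n : ℝ) ^ (t1 + 1 / a) := by
      rw [mul_assoc, mul_assoc, ← Real.rpow_add hnR, ← Real.rpow_add hnR]
      ring_nf
    rw [hL, hR] at hU2
    have hdiv : ((n : ℝ) : ℝ) ^ (1 / b - t1)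
        = (n : ℝ) ^ (1 / b + 1 / a) / (n : ℝ) ^ (t1 + 1 / a) := by
      rw [← Real.rpow_sub hnR]
      ring_nf
    rw [hdiv, div_le_iff₀ (Real.rpow_pos_of_pos hnR _)]
    exact hU2
  -- contradiction: (2^k)^ε unbounded
  set ε := 1 / b - t1 with hε
  have hεpos : 0 < ε := by rw [hε]; linarith
  have h2 : (1 : ℝ) < (2 : ℝ) ^ ε := Real.one_lt_rpow_iff_of_pos (by norm_num) |>.mpr (Or.inl ⟨by norm_num, hεpos⟩)
  obtain ⟨k, hk⟩ := pow_unbounded_of_one_lt C h2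
  have : ((2 ^ k : ℕ) : ℝ) ^ ε = ((2 : ℝ) ^ ε) ^ k := by
    push_cast
    rw [← Real.rpow_natCast (2 : ℝ) k, ← Real.rpow_natCast ((2:ℝ) ^ ε) k,
      ← Real.rpow_mul (by norm_num), ← Real.rpow_mul (by norm_num)]
    ring_nf
  have := (key k).trans_lt (hk.trans_eq this.symm)
  exact lt_irrefl _ this
end
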